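/- arXiv:1503.05390 — 6 statements merged into one kernel-verified Lean document; each statement's English description precedes it below -/
import Mathlib

section
/- Let 0 < a < b < ∞, let H : [a,b] → ℝ be non-decreasing, bounded and non-negative, and let G₁, G₂ : [a,b] → ℝ be continuous functions of bounded variation with G₁(b) = G₂(b) = 0. If G₁(x) ≤ G₂(x) for all x ∈ [a,b], then ∫_a^b H(x) d[−G₁(x)] ≤ ∫_a^b H(x) d[−G₂(x)], where the integrals are Riemann–Stieltjes integrals with respect to −G₁ and −G₂. -/
open Set Filter

noncomputable section

/-- The Riemann–Stieltjes sum of `f` with respect to `g` for the tagged partition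
given by points `t 0, t 1, ..., t n` with tags `ξ 0, ..., ξ (n-1)`. -/
def rsSum (f g : ℝ → ℝ) (n : ℕ) (t ξ : ℕ → ℝ) : ℝ :=
  ∑ i ∈ Finset.range n, f (ξ i) * (g (t (i + 1)) - g (t i))

/-- `IsRSIntegral f g a b I` says that the Riemann–Stieltjes integral
`∫_a^b f(x) dg(x)` exists and equals `I`: for every `ε > 0` there is `δ > 0` such
that every tagged partition of `[a, b]` of mesh `< δ` has Riemann–Stieltjes sum
within `ε` of `I`. -/
def IsRSIntegral (f g : ℝ → ℝ) (a b I : ℝ) : Prop :=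
  ∀ ε > 0, ∃ δ > 0, ∀ (n : ℕ) (t ξ : ℕ → ℝ),
    t 0 = a → t n = b →
    (∀ i < n, t i ≤ t (i + 1)) →
    (∀ i < n, ξ i ∈ Set.Icc (t i) (t (i + 1))) →
    (∀ i < n, t (i + 1) - t i < δ) →
    |rsSum f g n t ξ - I| < ε

/-- `IsImproperRSIntegral f g a I` says that the improper Riemann–Stieltjes integral
`∫_a^∞ f(x) dg(x) = lim_{b→∞} ∫_a^b f(x) dg(x)` exists and equals `I`. -/
def IsImproperRSIntegral (f g : ℝ → ℝ) (a I : ℝ) : Prop :=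
  ∃ F : ℝ → ℝ, (∀ b, a < b → IsRSIntegral f g a b (F b)) ∧
    Filter.Tendsto F Filter.atTop (nhds I)

/-! Evaluate both integrals on a common fine partition tagged at left endpoints. The difference
of the two sums is `∑ H(tᵢ) (D(tᵢ) - D(tᵢ₊₁))` with `D = G₂ - G₁ ≥ 0` and `D(b) = 0`; by Abel
summation it equals `H(t₀) D(t₀) + ∑ (H(tᵢ) - H(tᵢ₋₁)) D(tᵢ)`, a sum of non-negative terms since
`H` is non-decreasing and `H(a) ≥ 0`. -/

lemma mem_Icc_of_le_succ {α : Type*} [Preorder α] {t : ℕ → α} {n : ℕ}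
    (ht : ∀ i < n, t i ≤ t (i + 1)) {i : ℕ} (hi : i ≤ n) : t i ∈ Icc (t 0) (t n) := by
  have hmono : Monotone fun j => t (min j n) := monotone_nat_of_le_succ fun j => by
    rcases lt_or_ge j n with hj | hj
    · simpa [min_eq_left hj.le, min_eq_left (Nat.succ_le_of_lt hj)] using ht j hj
    · simp [min_eq_right hj, min_eq_right (hj.trans j.le_succ)]
  exact ⟨by simpa [hi] using hmono (Nat.zero_le i), by simpa [hi] using hmono hi⟩

lemma exists_partition_mesh_lt {a b δ : ℝ} (hab : a ≤ b) (hδ : 0 < δ) :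
    ∃ (n : ℕ) (t : ℕ → ℝ), t 0 = a ∧ t n = b ∧ (∀ i < n, t i ≤ t (i + 1)) ∧
      ∀ i < n, t (i + 1) - t i < δ := by
  obtain ⟨n, hn⟩ := exists_nat_gt ((b - a) / δ)
  have hn_pos : (0 : ℝ) < n := (div_nonneg (sub_nonneg.2 hab) hδ.le).trans_lt hn
  have hstep : ∀ i : ℕ, (a + (i + 1 : ℕ) * ((b - a) / n)) - (a + i * ((b - a) / n))
      = (b - a) / n := fun i => by push_cast; ring
  refine ⟨n, fun i => a + i * ((b - a) / n), by simp, by field_simp; ring, fun i _ => ?_,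
    fun i _ => ?_⟩
  · rw [← sub_nonneg, hstep]
    exact div_nonneg (sub_nonneg.2 hab) hn_pos.le
  · rw [hstep, div_lt_iff₀ hn_pos, mul_comm]
    exact (div_lt_iff₀ hδ).1 hn

lemma sum_mul_sub_succ_add_mul_nonneg {h f : ℕ → ℝ} (n : ℕ) (h₀ : 0 ≤ h 0)
    (hh : ∀ i < n, h i ≤ h (i + 1)) (hf : ∀ i ≤ n, 0 ≤ f i) :
    0 ≤ ∑ i ∈ Finset.range n, h i * (f i - f (i + 1)) + h n * f n := by
  induction n with
  | zero => simpa using mul_nonneg h₀ (hf 0 le_rfl)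
  | succ n ih =>
    have hprev := ih (fun i hi => hh i (by omega)) (fun i hi => hf i (by omega))
    have hstep : 0 ≤ (h (n + 1) - h n) * f (n + 1) :=
      mul_nonneg (sub_nonneg.2 (hh n n.lt_succ_self)) (hf (n + 1) le_rfl)
    rw [Finset.sum_range_succ]
    linarith

lemma rsSum_neg_le_rsSum_neg {a b : ℝ} {H G₁ G₂ : ℝ → ℝ} {n : ℕ} {t : ℕ → ℝ}
    (ht₀ : t 0 = a) (htn : t n = b) (ht : ∀ i < n, t i ≤ t (i + 1))
    (hH_mono : MonotoneOn H (Icc a b)) (hH_a : 0 ≤ H a)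
    (hle : ∀ x ∈ Icc a b, G₁ x ≤ G₂ x) (hb : G₁ b = G₂ b) :
    rsSum H (fun x => -G₁ x) n t t ≤ rsSum H (fun x => -G₂ x) n t t := by
  have hmem : ∀ i ≤ n, t i ∈ Icc a b := fun i hi => ht₀ ▸ htn ▸ mem_Icc_of_le_succ ht hi
  have habel := sum_mul_sub_succ_add_mul_nonneg (h := fun i => H (t i))
    (f := fun i => G₂ (t i) - G₁ (t i)) n (ht₀ ▸ hH_a)
    (fun i hi => hH_mono (hmem i hi.le) (hmem (i + 1) hi) (ht i hi))
    (fun i hi => sub_nonneg.2 (hle _ (hmem i hi)))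
  have hdiff : rsSum H (fun x => -G₂ x) n t t - rsSum H (fun x => -G₁ x) n t t
      = ∑ i ∈ Finset.range n,
          H (t i) * ((G₂ (t i) - G₁ (t i)) - (G₂ (t (i + 1)) - G₁ (t (i + 1)))) := by
    simp only [rsSum, ← Finset.sum_sub_distrib]
    exact Finset.sum_congr rfl fun i _ => by ring
  simp only [htn, hb, sub_self, mul_zero, add_zero] at habel
  linarith

lemma IsRSIntegral.le_of_forall_rsSum_le {f₁ g₁ f₂ g₂ : ℝ → ℝ} {a b I₁ I₂ : ℝ} (hab : a ≤ b)
    (hI₁ : IsRSIntegral f₁ g₁ a b I₁) (hI₂ : IsRSIntegral f₂ g₂ a b I₂)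
    (hsum : ∀ (n : ℕ) (t : ℕ → ℝ), t 0 = a → t n = b → (∀ i < n, t i ≤ t (i + 1)) →
      rsSum f₁ g₁ n t t ≤ rsSum f₂ g₂ n t t) :
    I₁ ≤ I₂ := by
  refine le_of_forall_pos_lt_add fun ε hε => ?_
  obtain ⟨δ₁, hδ₁, h₁⟩ := hI₁ (ε / 2) (half_pos hε)
  obtain ⟨δ₂, hδ₂, h₂⟩ := hI₂ (ε / 2) (half_pos hε)
  obtain ⟨n, t, ht₀, htn, ht, hmesh⟩ := exists_partition_mesh_lt hab (lt_min hδ₁ hδ₂)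
  have htag : ∀ i < n, t i ∈ Icc (t i) (t (i + 1)) := fun i hi => ⟨le_rfl, ht i hi⟩
  have hS₁ := abs_lt.1 <| h₁ n t t ht₀ htn ht htag fun i hi =>
    (hmesh i hi).trans_le (min_le_left _ _)
  have hS₂ := abs_lt.1 <| h₂ n t t ht₀ htn ht htag fun i hi =>
    (hmesh i hi).trans_le (min_le_right _ _)
  linarith [hsum n t ht₀ htn ht]

theorem rs_monotone_nondecreasing_general
    (a b : ℝ) (hab : a < b)
    (H G₁ G₂ : ℝ → ℝ) (I₁ I₂ : ℝ)
    (hH_mono : MonotoneOn H (Set.Icc a b))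
    (hH_nonneg : ∀ x ∈ Set.Icc a b, 0 ≤ H x)
    (hG₁_b : G₁ b = 0) (hG₂_b : G₂ b = 0)
    (hle : ∀ x ∈ Set.Icc a b, G₁ x ≤ G₂ x)
    (hI₁ : IsRSIntegral H (fun x => -G₁ x) a b I₁)
    (hI₂ : IsRSIntegral H (fun x => -G₂ x) a b I₂) :
    I₁ ≤ I₂ :=
  hI₁.le_of_forall_rsSum_le hab.le hI₂ fun _ _ ht₀ htn ht =>
    rsSum_neg_le_rsSum_neg ht₀ htn ht hH_mono (hH_nonneg a (left_mem_Icc.2 hab.le)) hle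
      (hG₁_b.trans hG₂_b.symm)

/-- If `0 < a < b < ∞`, `H` is non-decreasing, bounded and non-negative
on `[a,b]`, `G₁, G₂` are continuous, of bounded variation on `[a,b]` with
`G₁ b = G₂ b = 0` and `G₁ ≤ G₂` on `[a,b]`, then
`∫_a^b H(x) d[-G₁(x)] ≤ ∫_a^b H(x) d[-G₂(x)]`. -/
theorem rs_monotone_nondecreasing
    (a b : ℝ) (ha : 0 < a) (hab : a < b)
    (H G₁ G₂ : ℝ → ℝ) (I₁ I₂ : ℝ)
    (hH_mono : MonotoneOn H (Set.Icc a b))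
    (hH_bdd : ∃ M, ∀ x ∈ Set.Icc a b, |H x| ≤ M)
    (hH_nonneg : ∀ x ∈ Set.Icc a b, 0 ≤ H x)
    (hG₁_cont : ContinuousOn G₁ (Set.Icc a b))
    (hG₁_bv : BoundedVariationOn G₁ (Set.Icc a b))
    (hG₂_cont : ContinuousOn G₂ (Set.Icc a b))
    (hG₂_bv : BoundedVariationOn G₂ (Set.Icc a b))
    (hG₁_b : G₁ b = 0) (hG₂_b : G₂ b = 0)
    (hle : ∀ x ∈ Set.Icc a b, G₁ x ≤ G₂ x)
    (hI₁ : IsRSIntegral H (fun x => -G₁ x) a b I₁)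
    (hI₂ : IsRSIntegral H (fun x => -G₂ x) a b I₂) :
    I₁ ≤ I₂ :=
  rs_monotone_nondecreasing_general a b hab H G₁ G₂ I₁ I₂ hH_mono hH_nonneg hG₁_b hG₂_b hle hI₁ hI₂
end
end

section
/- Let 0 < a < b < ∞, let H : [a,b] → ℝ be strictly increasing, bounded and non-negative, and let G₁, G₂ : [a,b] → ℝ be continuous functions of bounded variation with G₁(b) = G₂(b) = 0. If G₁(x) < G₂(x) for all x ∈ [a,b), then ∫_a^b H(x) d[−G₁(x)] < ∫_a^b H(x) d[−G₂(x)], where the integrals are Riemann–Stieltjes integrals with respect to −G₁ and −G₂. -/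
/-!
The difference `I₂ - I₁` is the Riemann–Stieltjes integral of `H` against `-D`, where
`D = G₂ - G₁` is continuous, positive on `[a, b)` and vanishes at `b`. Summing by parts,
the left-endpoint sum of `H` against `-D` on a partition `t` of `[a, b]` is
`H a * D a + ∑ (H (tᵢ₊₁) - H tᵢ) * D tᵢ₊₁`, a sum of non-negative terms. On the middle third
`[p, q]` of `[a, b]` the function `D` is bounded below by some `m > 0`, so every such sum is at
least `m * (H q - H p) > 0`, and so is its limit.
-/

open Set Filter

noncomputable section

open Topology

def uniformPartition (a b : ℝ) (n i : ℕ) : ℝ :=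
  a + i * ((b - a) / n)

section uniformPartition

variable {a b : ℝ} {n : ℕ}

@[simp]
lemma uniformPartition_zero : uniformPartition a b n 0 = a := by
  simp [uniformPartition]

lemma uniformPartition_self (hn : n ≠ 0) : uniformPartition a b n n = b := by
  simp [uniformPartition, mul_div_cancel₀ (b - a) (Nat.cast_ne_zero.2 hn : (n : ℝ) ≠ 0)]

lemma uniformPartition_succ_sub (i : ℕ) :
    uniformPartition a b n (i + 1) - uniformPartition a b n i = (b - a) / n := by
  simp only [uniformPartition]
  push_cast
  ring

lemma uniformPartition_monotone (hab : a ≤ b) : Monotone (uniformPartition a b n) :=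
  fun i j hij => by
    unfold uniformPartition
    gcongr

lemma uniformPartition_mul_mul {k : ℕ} (hk : k ≠ 0) (i : ℕ) :
    uniformPartition a b (k * n) (k * i) = uniformPartition a b n i := by
  simp only [uniformPartition]
  push_cast
  have hk' : (k : ℝ) ≠ 0 := Nat.cast_ne_zero.2 hk
  congr 1
  field_simp

end uniformPartition

lemma rsSum_sub (f g h : ℝ → ℝ) (n : ℕ) (t ξ : ℕ → ℝ) :
    rsSum f g n t ξ - rsSum f h n t ξ = rsSum f (fun x => g x - h x) n t ξ := by
  simp only [rsSum, ← Finset.sum_sub_distrib]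
  exact Finset.sum_congr rfl fun i _ => by ring

lemma rsSum_neg_by_parts (f g : ℝ → ℝ) (n : ℕ) (t : ℕ → ℝ) :
    rsSum f (fun x => -g x) n t t =
      f (t 0) * g (t 0) - f (t n) * g (t n) +
        ∑ i ∈ Finset.range n, (f (t (i + 1)) - f (t i)) * g (t (i + 1)) := by
  induction n with
  | zero => simp [rsSum]
  | succ n ih =>
    simp only [rsSum] at ih ⊢
    rw [Finset.sum_range_succ, ih, Finset.sum_range_succ]
    ring

lemma mul_sub_le_rsSum_neg {f g : ℝ → ℝ} {a b m : ℝ} {n j k : ℕ} {t : ℕ → ℝ}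
    (ht : Monotone t) (ht0 : t 0 = a) (htn : t n = b)
    (hf : MonotoneOn f (Icc a b)) (hfa : 0 ≤ f a)
    (hg : ∀ x ∈ Icc a b, 0 ≤ g x) (hgb : g b = 0) (hjk : j ≤ k) (hkn : k ≤ n)
    (hm : ∀ i ∈ Finset.Ico j k, m ≤ g (t (i + 1))) :
    m * (f (t k) - f (t j)) ≤ rsSum f (fun x => -g x) n t t := by
  have ht_mem : ∀ i ≤ n, t i ∈ Icc a b := fun i hi =>
    ⟨ht0 ▸ ht (Nat.zero_le i), htn ▸ ht hi⟩
  have hdf : ∀ i < n, 0 ≤ f (t (i + 1)) - f (t i) := fun i hi =>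
    sub_nonneg.2 (hf (ht_mem i hi.le) (ht_mem (i + 1) hi) (ht i.le_succ))
  have hterm : ∀ i < n, 0 ≤ (f (t (i + 1)) - f (t i)) * g (t (i + 1)) := fun i hi =>
    mul_nonneg (hdf i hi) (hg _ (ht_mem (i + 1) hi))
  have hIco : Finset.Ico j k ⊆ Finset.range n := fun i hi => by
    simp only [Finset.mem_Ico, Finset.mem_range] at hi ⊢
    omega
  rw [rsSum_neg_by_parts, ht0, htn, hgb, mul_zero, sub_zero]
  calc m * (f (t k) - f (t j))
      = ∑ i ∈ Finset.Ico j k, m * (f (t (i + 1)) - f (t i)) := by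
        rw [← Finset.mul_sum, Finset.sum_Ico_sub (fun i => f (t i)) hjk]
    _ ≤ ∑ i ∈ Finset.Ico j k, (f (t (i + 1)) - f (t i)) * g (t (i + 1)) := by
        refine Finset.sum_le_sum fun i hi => ?_
        rw [mul_comm]
        exact mul_le_mul_of_nonneg_left (hm i hi)
          (hdf i (Finset.mem_range.1 (hIco hi)))
    _ ≤ ∑ i ∈ Finset.range n, (f (t (i + 1)) - f (t i)) * g (t (i + 1)) :=
        Finset.sum_le_sum_of_subset_of_nonneg hIco fun i hi _ =>
          hterm i (Finset.mem_range.1 hi)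
    _ ≤ f a * g a + ∑ i ∈ Finset.range n, (f (t (i + 1)) - f (t i)) * g (t (i + 1)) :=
        le_add_of_nonneg_left (mul_nonneg hfa (hg a (ht0 ▸ ht_mem 0 n.zero_le)))

namespace IsRSIntegral

variable {f g h : ℝ → ℝ} {a b I J : ℝ}

lemma sub (hI : IsRSIntegral f g a b I) (hJ : IsRSIntegral f h a b J) :
    IsRSIntegral f (fun x => g x - h x) a b (I - J) := by
  intro ε hε
  obtain ⟨δ₁, hδ₁, h₁⟩ := hI (ε / 2) (half_pos hε)
  obtain ⟨δ₂, hδ₂, h₂⟩ := hJ (ε / 2) (half_pos hε)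
  refine ⟨min δ₁ δ₂, lt_min hδ₁ hδ₂, fun n t ξ ht0 htn hmono htag hmesh => ?_⟩
  have e₁ := h₁ n t ξ ht0 htn hmono htag fun i hi => (hmesh i hi).trans_le (min_le_left _ _)
  have e₂ := h₂ n t ξ ht0 htn hmono htag fun i hi => (hmesh i hi).trans_le (min_le_right _ _)
  rw [← rsSum_sub]
  calc |rsSum f g n t ξ - rsSum f h n t ξ - (I - J)|
      = |(rsSum f g n t ξ - I) - (rsSum f h n t ξ - J)| := by ring_nf
    _ ≤ |rsSum f g n t ξ - I| + |rsSum f h n t ξ - J| := abs_sub _ _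
    _ < ε := by linarith

lemma tendsto_rsSum_uniformPartition (hab : a ≤ b) (hI : IsRSIntegral f g a b I) :
    Tendsto (fun n => rsSum f g n (uniformPartition a b n) (uniformPartition a b n))
      atTop (𝓝 I) := by
  rw [Metric.tendsto_nhds]
  intro ε hε
  obtain ⟨δ, hδ, hsum⟩ := hI ε hε
  have hmesh : ∀ᶠ n : ℕ in atTop, (b - a) / n < δ :=
    (tendsto_const_div_atTop_nhds_zero_nat (b - a)).eventually (gt_mem_nhds hδ)
  filter_upwards [hmesh, eventually_ne_atTop 0] with n hn hn0
  have ht := uniformPartition_monotone (n := n) hab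
  exact hsum n _ _ uniformPartition_zero (uniformPartition_self hn0)
    (fun i _ => ht i.le_succ) (fun i _ => ⟨le_rfl, ht i.le_succ⟩)
    (fun i _ => (uniformPartition_succ_sub i).trans_lt hn)

lemma pos_of_strictMonoOn (hab : a < b) (hf : StrictMonoOn f (Icc a b)) (hfa : 0 ≤ f a)
    (hg : ContinuousOn g (Icc a b)) (hg_pos : ∀ x ∈ Ico a b, 0 < g x) (hgb : g b = 0)
    (hI : IsRSIntegral f (fun x => -g x) a b I) : 0 < I := by
  set p := uniformPartition a b 3 1
  set q := uniformPartition a b 3 2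
  have hpq : Icc p q ⊆ Ico a b := fun x hx => by
    simp only [p, q, uniformPartition, mem_Icc, mem_Ico] at hx ⊢
    constructor <;> linarith [hx.1, hx.2]
  have hpq_lt : p < q := by simp only [p, q, uniformPartition]; linarith
  obtain ⟨x₀, hx₀, hmin⟩ := isCompact_Icc.exists_isMinOn (nonempty_Icc.2 hpq_lt.le)
    (hg.mono (hpq.trans Ico_subset_Icc_self))
  have hp : p ∈ Icc a b := Ico_subset_Icc_self (hpq (left_mem_Icc.2 hpq_lt.le))
  have hq : q ∈ Icc a b := Ico_subset_Icc_self (hpq (right_mem_Icc.2 hpq_lt.le))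
  have hgap : 0 < g x₀ * (f q - f p) :=
    mul_pos (hg_pos x₀ (hpq hx₀)) (sub_pos.2 (hf hp hq hpq_lt))
  have hg_nonneg : ∀ x ∈ Icc a b, 0 ≤ g x := fun x hx =>
    (eq_or_lt_of_le hx.2).elim (fun h => h ▸ hgb.ge) fun h => (hg_pos x ⟨hx.1, h⟩).le
  -- Along `n = 3N`, the nodes `N` and `2N` of the uniform partition are `p` and `q`.
  have hlim : Tendsto (fun N => rsSum f (fun x => -g x) (3 * N) (uniformPartition a b (3 * N))
      (uniformPartition a b (3 * N))) atTop (𝓝 I) :=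
    (hI.tendsto_rsSum_uniformPartition hab.le).comp
      (tendsto_id.const_mul_atTop' (by norm_num : 0 < 3))
  refine hgap.trans_le (ge_of_tendsto hlim ?_)
  filter_upwards [eventually_ne_atTop 0] with N hN
  have ht := uniformPartition_monotone (a := a) (n := 3 * N) hab.le
  have htN : uniformPartition a b (3 * N) N = p := by
    simpa [mul_comm] using uniformPartition_mul_mul (a := a) (b := b) (n := 3) hN 1
  have ht2N : uniformPartition a b (3 * N) (2 * N) = q := by
    simpa [mul_comm] using uniformPartition_mul_mul (a := a) (b := b) (n := 3) hN 2
  have hbound := mul_sub_le_rsSum_neg ht uniformPartition_zero (uniformPartition_self (by omega))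
    hf.monotoneOn hfa hg_nonneg hgb (by omega : N ≤ 2 * N) (by omega : 2 * N ≤ 3 * N)
    fun i hi => have hi := Finset.mem_Ico.1 hi
      hmin ⟨htN ▸ ht (by omega), ht2N ▸ ht (by omega)⟩
  rwa [htN, ht2N] at hbound

end IsRSIntegral

theorem rs_monotone_strict_increasing_general
    (a b : ℝ) (hab : a < b)
    (H G₁ G₂ : ℝ → ℝ) (I₁ I₂ : ℝ)
    (hH_mono : StrictMonoOn H (Set.Icc a b))
    (hH_nonneg : ∀ x ∈ Set.Icc a b, 0 ≤ H x)
    (hG₁_cont : ContinuousOn G₁ (Set.Icc a b))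
    (hG₂_cont : ContinuousOn G₂ (Set.Icc a b))
    (hG₁_b : G₁ b = 0) (hG₂_b : G₂ b = 0)
    (hlt : ∀ x ∈ Set.Ico a b, G₁ x < G₂ x)
    (hI₁ : IsRSIntegral H (fun x => -G₁ x) a b I₁)
    (hI₂ : IsRSIntegral H (fun x => -G₂ x) a b I₂) :
    I₁ < I₂ := by
  have hdiff : IsRSIntegral H (fun x => -(G₂ x - G₁ x)) a b (I₂ - I₁) := by
    convert hI₂.sub hI₁ using 2 with x
    ring
  have hpos := hdiff.pos_of_strictMonoOn hab hH_mono (hH_nonneg a (left_mem_Icc.2 hab.le))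
    (hG₂_cont.sub hG₁_cont) (fun x hx => sub_pos.2 (hlt x hx)) (by simp [hG₁_b, hG₂_b])
  linarith

/-- If `0 < a < b < ∞`, `H` is strictly increasing, bounded and
non-negative on `[a,b]`, `G₁, G₂` are continuous, of bounded variation on `[a,b]` with
`G₁ b = G₂ b = 0` and `G₁ < G₂` on `[a,b)`, then
`∫_a^b H(x) d[-G₁(x)] < ∫_a^b H(x) d[-G₂(x)]`. -/
theorem rs_monotone_strict_increasing
    (a b : ℝ) (ha : 0 < a) (hab : a < b)
    (H G₁ G₂ : ℝ → ℝ) (I₁ I₂ : ℝ)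
    (hH_mono : StrictMonoOn H (Set.Icc a b))
    (hH_bdd : ∃ M, ∀ x ∈ Set.Icc a b, |H x| ≤ M)
    (hH_nonneg : ∀ x ∈ Set.Icc a b, 0 ≤ H x)
    (hG₁_cont : ContinuousOn G₁ (Set.Icc a b))
    (hG₁_bv : BoundedVariationOn G₁ (Set.Icc a b))
    (hG₂_cont : ContinuousOn G₂ (Set.Icc a b))
    (hG₂_bv : BoundedVariationOn G₂ (Set.Icc a b))
    (hG₁_b : G₁ b = 0) (hG₂_b : G₂ b = 0)
    (hlt : ∀ x ∈ Set.Ico a b, G₁ x < G₂ x)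
    (hI₁ : IsRSIntegral H (fun x => -G₁ x) a b I₁)
    (hI₂ : IsRSIntegral H (fun x => -G₂ x) a b I₂) :
    I₁ < I₂ :=
  rs_monotone_strict_increasing_general a b hab H G₁ G₂ I₁ I₂ hH_mono hH_nonneg hG₁_cont hG₂_cont
    hG₁_b hG₂_b hlt hI₁ hI₂
end
end

section
/- Let a > 0, let H : [a,∞) → ℝ be non-decreasing, bounded and non-negative, and let G₁, G₂ : [a,∞) → ℝ be continuous functions of bounded variation on [a,∞) with lim_{x→∞} G₁(x) = lim_{x→∞} G₂(x) = 0. Then the improper Riemann–Stieltjes integrals ∫_a^∞ H(x) d[−G₁(x)] and ∫_a^∞ H(x) d[−G₂(x)] exist, and if G₁(x) ≤ G₂(x) for all x ≥ a, then ∫_a^∞ H(x) d[−G₁(x)] ≤ ∫_a^∞ H(x) d[−G₂(x)]. -/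
open Set Filter

noncomputable section

/-!
Integration by parts gives `∫_a^b H d(-G) = H(a) G(a) - H(b) G(b) + ∫_a^b G dH`, where the
last integral exists as a Darboux–Stieltjes integral because `G` is continuous and `H` is
monotone; on Riemann–Stieltjes sums this is Abel summation, which trades a tagged partition for
the partition formed by its tags. As `b → ∞` the boundary term `H(b) G(b)` vanishes since `H` is
bounded, and `∫_a^b G dH` converges by the Cauchy criterion: its increment over `[p, q]` is at
most `sup_{[p, q]} |G| · (H q - H p)`. The comparison follows from `H(a) ≥ 0` and the
monotonicity of `∫ G dH` in `G` for non-decreasing `H`.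
-/

structure IsPartition (a b : ℝ) (n : ℕ) (t : ℕ → ℝ) : Prop where
  first : t 0 = a
  last : t n = b
  le_succ : ∀ i < n, t i ≤ t (i + 1)

namespace IsPartition

variable {a b : ℝ} {n : ℕ} {t : ℕ → ℝ}

theorem mono (hP : IsPartition a b n t) {i j : ℕ} (hij : i ≤ j) (hj : j ≤ n) : t i ≤ t j := by
  induction j, hij using Nat.le_induction with
  | base => exact le_rfl
  | succ k _ ih => exact (ih (by omega)).trans (hP.le_succ k (by omega))

theorem left_le (hP : IsPartition a b n t) {i : ℕ} (hi : i ≤ n) : a ≤ t i :=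
  hP.first ▸ hP.mono (Nat.zero_le i) hi

theorem le_right (hP : IsPartition a b n t) {i : ℕ} (hi : i ≤ n) : t i ≤ b :=
  hP.last ▸ hP.mono hi le_rfl

theorem Icc_subset (hP : IsPartition a b n t) {i : ℕ} (hi : i < n) :
    Icc (t i) (t (i + 1)) ⊆ Icc a b :=
  Icc_subset_Icc (hP.left_le hi.le) (hP.le_right hi)

theorem sub_nonneg_of_monotoneOn {H : ℝ → ℝ} (hP : IsPartition a b n t)
    (hH : MonotoneOn H (Icc a b)) {i : ℕ} (hi : i < n) : 0 ≤ H (t (i + 1)) - H (t i) :=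
  sub_nonneg.2 <| hH (hP.Icc_subset hi (left_mem_Icc.2 (hP.le_succ i hi)))
    (hP.Icc_subset hi (right_mem_Icc.2 (hP.le_succ i hi))) (hP.le_succ i hi)

theorem sum_sub (hP : IsPartition a b n t) (H : ℝ → ℝ) :
    ∑ i ∈ Finset.range n, (H (t (i + 1)) - H (t i)) = H b - H a := by
  rw [Finset.sum_range_sub (fun i => H (t i)), hP.first, hP.last]

theorem update (hP : IsPartition a b n t) {c : ℝ} (hbc : b ≤ c) :
    IsPartition a c (n + 1) (Function.update t (n + 1) c) where
  first := by rw [Function.update_of_ne (by omega), hP.first]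
  last := Function.update_self ..
  le_succ i hi := by
    rcases Nat.lt_succ_iff_lt_or_eq.1 hi with hi | rfl
    · rw [Function.update_of_ne (by omega), Function.update_of_ne (by omega)]
      exact hP.le_succ i hi
    · rw [Function.update_of_ne (by omega), Function.update_self, hP.last]
      exact hbc

end IsPartition

theorem exists_isPartition_sub_lt {a b δ : ℝ} (hab : a ≤ b) (hδ : 0 < δ) :
    ∃ n t, IsPartition a b n t ∧ ∀ i < n, t (i + 1) - t i < δ := by
  obtain ⟨n, hn⟩ := exists_nat_gt ((b - a) / δ)
  have hn0 : (0 : ℝ) < n := (div_nonneg (sub_nonneg.2 hab) hδ.le).trans_lt hn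
  have hstep : (b - a) / n < δ := by rwa [div_lt_comm₀ hn0 hδ]
  refine ⟨n, fun i => a + i * ((b - a) / n),
    ⟨by simp, by field_simp; ring, fun i _ => ?_⟩, fun i _ => ?_⟩
  · push_cast
    nlinarith [div_nonneg (sub_nonneg.2 hab) hn0.le]
  · push_cast
    linarith

def lowerSum (g H : ℝ → ℝ) (n : ℕ) (t : ℕ → ℝ) : ℝ :=
  ∑ i ∈ Finset.range n, sInf (g '' Icc (t i) (t (i + 1))) * (H (t (i + 1)) - H (t i))

def upperSum (g H : ℝ → ℝ) (n : ℕ) (t : ℕ → ℝ) : ℝ :=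
  ∑ i ∈ Finset.range n, sSup (g '' Icc (t i) (t (i + 1))) * (H (t (i + 1)) - H (t i))

section DarbouxSums

variable {g H : ℝ → ℝ} {a b : ℝ} {n : ℕ} {t : ℕ → ℝ}

theorem lowerSum_update (g H : ℝ → ℝ) (n : ℕ) (t : ℕ → ℝ) (c : ℝ) :
    lowerSum g H (n + 1) (Function.update t (n + 1) c)
      = lowerSum g H n t + sInf (g '' Icc (t n) c) * (H c - H (t n)) := by
  rw [lowerSum, lowerSum, Finset.sum_range_succ, Function.update_self,
    Function.update_of_ne (by omega)]
  congr 1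
  refine Finset.sum_congr rfl fun i hi => ?_
  have hi := Finset.mem_range.1 hi
  rw [Function.update_of_ne (by omega), Function.update_of_ne (by omega)]

theorem upperSum_update (g H : ℝ → ℝ) (n : ℕ) (t : ℕ → ℝ) (c : ℝ) :
    upperSum g H (n + 1) (Function.update t (n + 1) c)
      = upperSum g H n t + sSup (g '' Icc (t n) c) * (H c - H (t n)) := by
  rw [upperSum, upperSum, Finset.sum_range_succ, Function.update_self,
    Function.update_of_ne (by omega)]
  congr 1
  refine Finset.sum_congr rfl fun i hi => ?_
  have hi := Finset.mem_range.1 hi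
  rw [Function.update_of_ne (by omega), Function.update_of_ne (by omega)]

theorem lowerSum_le_rsSum (hH : MonotoneOn H (Icc a b)) (hg : BddBelow (g '' Icc a b))
    (hP : IsPartition a b n t) {τ : ℕ → ℝ} (hτ : ∀ i < n, τ i ∈ Icc (t i) (t (i + 1))) :
    lowerSum g H n t ≤ rsSum g H n t τ := by
  refine Finset.sum_le_sum fun i hi => ?_
  have hi := Finset.mem_range.1 hi
  exact mul_le_mul_of_nonneg_right
    (csInf_le (hg.mono (image_mono (hP.Icc_subset hi))) (mem_image_of_mem g (hτ i hi)))
    (hP.sub_nonneg_of_monotoneOn hH hi)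

theorem rsSum_le_upperSum (hH : MonotoneOn H (Icc a b)) (hg : BddAbove (g '' Icc a b))
    (hP : IsPartition a b n t) {τ : ℕ → ℝ} (hτ : ∀ i < n, τ i ∈ Icc (t i) (t (i + 1))) :
    rsSum g H n t τ ≤ upperSum g H n t := by
  refine Finset.sum_le_sum fun i hi => ?_
  have hi := Finset.mem_range.1 hi
  exact mul_le_mul_of_nonneg_right
    (le_csSup (hg.mono (image_mono (hP.Icc_subset hi))) (mem_image_of_mem g (hτ i hi)))
    (hP.sub_nonneg_of_monotoneOn hH hi)

theorem sSup_image_sub_sInf_image_le {s : Set ℝ} (hs : s.Nonempty) {ω : ℝ}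
    (hω : ∀ x ∈ s, ∀ y ∈ s, g x - g y ≤ ω) : sSup (g '' s) - sInf (g '' s) ≤ ω := by
  rw [sub_le_iff_le_add]
  refine csSup_le (hs.image g) ?_
  rintro _ ⟨x, hx, rfl⟩
  rw [← sub_le_iff_le_add']
  refine le_csInf (hs.image g) ?_
  rintro _ ⟨y, hy, rfl⟩
  linarith [hω x hx y hy]

theorem upperSum_sub_lowerSum_le (hH : MonotoneOn H (Icc a b)) (hP : IsPartition a b n t)
    {ω : ℝ} (hω : ∀ i < n, ∀ x ∈ Icc (t i) (t (i + 1)), ∀ y ∈ Icc (t i) (t (i + 1)),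
      g x - g y ≤ ω) :
    upperSum g H n t - lowerSum g H n t ≤ ω * (H b - H a) := by
  rw [upperSum, lowerSum, ← Finset.sum_sub_distrib, ← hP.sum_sub H, Finset.mul_sum]
  refine Finset.sum_le_sum fun i hi => ?_
  have hi := Finset.mem_range.1 hi
  rw [← sub_mul]
  exact mul_le_mul_of_nonneg_right
    (sSup_image_sub_sInf_image_le (nonempty_Icc.2 (hP.le_succ i hi)) (hω i hi))
    (hP.sub_nonneg_of_monotoneOn hH hi)

theorem exists_upperSum_sub_lowerSum_lt (hH : MonotoneOn H (Icc a b))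
    (hg : ContinuousOn g (Icc a b)) {ε : ℝ} (hε : 0 < ε) :
    ∃ δ > 0, ∀ n t, IsPartition a b n t → (∀ i < n, t (i + 1) - t i < δ) →
      upperSum g H n t - lowerSum g H n t < ε := by
  set ω := ε / (|H b - H a| + 1)
  have hω : 0 < ω := by positivity
  have hωε : ω * (H b - H a) < ε := by
    calc ω * (H b - H a) ≤ ω * |H b - H a| := by gcongr; exact le_abs_self _
      _ < ω * (|H b - H a| + 1) := by gcongr; linarith
      _ = ε := div_mul_cancel₀ ε (by positivity)
  obtain ⟨δ, hδ, hgδ⟩ := Metric.uniformContinuousOn_iff.1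
    (isCompact_Icc.uniformContinuousOn_of_continuous hg) ω hω
  refine ⟨δ, hδ, fun n t hP hmesh => ?_⟩
  refine (upperSum_sub_lowerSum_le hH hP fun i hi x hx y hy => ?_).trans_lt hωε
  have hxy : dist x y < δ := by
    rw [Real.dist_eq, abs_lt]
    constructor <;> linarith [hmesh i hi, hx.1, hx.2, hy.1, hy.2]
  exact (le_abs_self _).trans
    (hgδ x (hP.Icc_subset hi hx) y (hP.Icc_subset hi hy) hxy).le

end DarbouxSums

section Refinement

variable {H : ℝ → ℝ} {u v : ℝ}

theorem sum_range_sub_clamp (H : ℝ → ℝ) (huv : u ≤ v) {m : ℕ} {s : ℕ → ℝ} (h0 : s 0 ≤ u)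
    (hm : v ≤ s m) :
    ∑ j ∈ Finset.range m, (H (min v (max u (s (j + 1)))) - H (min v (max u (s j))))
      = H v - H u := by
  rw [Finset.sum_range_sub (fun j => H (min v (max u (s j)))), max_eq_left h0,
    min_eq_right huv, min_eq_left (hm.trans (le_max_right _ _))]

/-- Both sides are the `H`-increment over `[u, v] ∩ [p, q]`. -/
theorem clamp_sub_clamp_comm (H : ℝ → ℝ) (huv : u ≤ v) {p q : ℝ} (hpq : p ≤ q) :
    H (min v (max u q)) - H (min v (max u p)) = H (min q (max p v)) - H (min q (max p u)) := by
  grind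

theorem mul_clamp_sub_le_mul (hH : MonotoneOn H (Icc u v)) (huv : u ≤ v) {p q : ℝ} (hpq : p ≤ q)
    {c d : ℝ} (hcd : (Icc u v ∩ Icc p q).Nonempty → c ≤ d) :
    c * (H (min v (max u q)) - H (min v (max u p)))
      ≤ d * (H (min v (max u q)) - H (min v (max u p))) := by
  by_cases hne : (Icc u v ∩ Icc p q).Nonempty
  · have hmem : ∀ x, min v (max u x) ∈ Icc u v := fun x =>
      ⟨le_min huv (le_max_left _ _), min_le_left _ _⟩
    exact mul_le_mul_of_nonneg_right (hcd hne) <| sub_nonneg.2 <|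
      hH (hmem p) (hmem q) (min_le_min_left _ (max_le_max_left _ hpq))
  · rw [Icc_inter_Icc, nonempty_Icc] at hne
    have hclamp : min v (max u q) = min v (max u p) := by grind
    rw [hclamp, sub_self, mul_zero, mul_zero]

end Refinement

section DarbouxIntegral

variable {g H : ℝ → ℝ} {a b : ℝ} {n : ℕ} {t : ℕ → ℝ}

/-- `Δ i j` is the `H`-increment over the `(i, j)` cell of the common refinement, read off by
clamping `s` to the `i`-th cell of `t`. -/
theorem lowerSum_le_upperSum (hH : MonotoneOn H (Icc a b))
    (hg : Bornology.IsBounded (g '' Icc a b))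
    {m : ℕ} {s : ℕ → ℝ} (hP : IsPartition a b n t) (hQ : IsPartition a b m s) :
    lowerSum g H n t ≤ upperSum g H m s := by
  set Δ : ℕ → ℕ → ℝ := fun i j =>
    H (min (t (i + 1)) (max (t i) (s (j + 1)))) - H (min (t (i + 1)) (max (t i) (s j)))
  have hrow : ∀ i < n, ∑ j ∈ Finset.range m, Δ i j = H (t (i + 1)) - H (t i) := fun i hi =>
    sum_range_sub_clamp H (hP.le_succ i hi) (hQ.first ▸ hP.left_le hi.le)
      (hQ.last ▸ hP.le_right hi)
  have hcol : ∀ j < m, ∑ i ∈ Finset.range n, Δ i j = H (s (j + 1)) - H (s j) := fun j hj => by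
    rw [← sum_range_sub_clamp H (hQ.le_succ j hj) (hP.first ▸ hQ.left_le hj.le)
      (hP.last ▸ hQ.le_right hj)]
    refine Finset.sum_congr rfl fun i hi => ?_
    exact clamp_sub_clamp_comm H (hP.le_succ i (Finset.mem_range.1 hi)) (hQ.le_succ j hj)
  have hterm : ∀ i < n, ∀ j < m, sInf (g '' Icc (t i) (t (i + 1))) * Δ i j
      ≤ sSup (g '' Icc (s j) (s (j + 1))) * Δ i j := by
    intro i hi j hj
    refine mul_clamp_sub_le_mul (hH.mono (hP.Icc_subset hi)) (hP.le_succ i hi) (hQ.le_succ j hj)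
      fun ⟨x, hxt, hxs⟩ => ?_
    exact (csInf_le (hg.bddBelow.mono (image_mono (hP.Icc_subset hi)))
      (mem_image_of_mem g hxt)).trans
      (le_csSup (hg.bddAbove.mono (image_mono (hQ.Icc_subset hj))) (mem_image_of_mem g hxs))
  calc lowerSum g H n t
      = ∑ i ∈ Finset.range n, ∑ j ∈ Finset.range m, sInf (g '' Icc (t i) (t (i + 1))) * Δ i j :=
        Finset.sum_congr rfl fun i hi => by rw [← Finset.mul_sum, hrow i (Finset.mem_range.1 hi)]
    _ ≤ ∑ i ∈ Finset.range n, ∑ j ∈ Finset.range m, sSup (g '' Icc (s j) (s (j + 1))) * Δ i j :=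
        Finset.sum_le_sum fun i hi => Finset.sum_le_sum fun j hj =>
          hterm i (Finset.mem_range.1 hi) j (Finset.mem_range.1 hj)
    _ = upperSum g H m s := by
        rw [Finset.sum_comm]
        exact Finset.sum_congr rfl fun j hj => by
          rw [← Finset.mul_sum, hcol j (Finset.mem_range.1 hj)]

/-- The lower Darboux–Stieltjes integral `∫_a^b g dH`. -/
def lowerIntegral (g H : ℝ → ℝ) (a b : ℝ) : ℝ :=
  sSup {L | ∃ n t, IsPartition a b n t ∧ lowerSum g H n t = L}

theorem lowerSum_le_lowerIntegral (hH : MonotoneOn H (Icc a b))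
    (hg : Bornology.IsBounded (g '' Icc a b)) (hP : IsPartition a b n t) :
    lowerSum g H n t ≤ lowerIntegral g H a b :=
  le_csSup ⟨upperSum g H n t, fun _ ⟨_, _, hQ, hL⟩ => hL ▸ lowerSum_le_upperSum hH hg hQ hP⟩
    ⟨n, t, hP, rfl⟩

theorem lowerIntegral_le_upperSum (hH : MonotoneOn H (Icc a b))
    (hg : Bornology.IsBounded (g '' Icc a b)) (hP : IsPartition a b n t) :
    lowerIntegral g H a b ≤ upperSum g H n t :=
  csSup_le ⟨_, n, t, hP, rfl⟩ fun _ ⟨_, _, hQ, hL⟩ => hL ▸ lowerSum_le_upperSum hH hg hQ hP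

theorem lowerIntegral_mono {g₁ g₂ : ℝ → ℝ} (hab : a ≤ b) (hH : MonotoneOn H (Icc a b))
    (hg₁ : Bornology.IsBounded (g₁ '' Icc a b)) (hg₂ : Bornology.IsBounded (g₂ '' Icc a b))
    (hle : ∀ x ∈ Icc a b, g₁ x ≤ g₂ x) : lowerIntegral g₁ H a b ≤ lowerIntegral g₂ H a b := by
  obtain ⟨n₀, t₀, hP₀, -⟩ := exists_isPartition_sub_lt hab one_pos
  refine csSup_le ⟨_, n₀, t₀, hP₀, rfl⟩ fun _ ⟨n, t, hP, hL⟩ => hL ▸ ?_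
  refine le_trans (Finset.sum_le_sum fun i hi => ?_) (lowerSum_le_lowerIntegral hH hg₂ hP)
  have hi := Finset.mem_range.1 hi
  refine mul_le_mul_of_nonneg_right ?_ (hP.sub_nonneg_of_monotoneOn hH hi)
  refine le_csInf ((nonempty_Icc.2 (hP.le_succ i hi)).image g₂) ?_
  rintro _ ⟨x, hx, rfl⟩
  exact (csInf_le (hg₁.bddBelow.mono (image_mono (hP.Icc_subset hi)))
    (mem_image_of_mem g₁ hx)).trans
    (hle x (hP.Icc_subset hi hx))

variable {p q : ℝ}

theorem lowerIntegral_add_sInf_mul_le (hap : a ≤ p) (hpq : p ≤ q) (hH : MonotoneOn H (Icc a q))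
    (hg : Bornology.IsBounded (g '' Icc a q)) :
    lowerIntegral g H a p + sInf (g '' Icc p q) * (H q - H p) ≤ lowerIntegral g H a q := by
  obtain ⟨n₀, t₀, hP₀, -⟩ := exists_isPartition_sub_lt hap one_pos
  rw [← le_sub_iff_add_le]
  refine csSup_le ⟨_, n₀, t₀, hP₀, rfl⟩ fun _ ⟨n, t, hP, hL⟩ => hL ▸ ?_
  rw [le_sub_iff_add_le, ← hP.last, ← lowerSum_update]
  exact lowerSum_le_lowerIntegral hH hg (hP.update hpq)

theorem lowerIntegral_le_add_sSup_mul (hap : a ≤ p) (hpq : p ≤ q) (hH : MonotoneOn H (Icc a q))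
    (hg : ContinuousOn g (Icc a q)) :
    lowerIntegral g H a q ≤ lowerIntegral g H a p + sSup (g '' Icc p q) * (H q - H p) := by
  have hsub : Icc a p ⊆ Icc a q := Icc_subset_Icc_right hpq
  have hbdd : Bornology.IsBounded (g '' Icc a q) :=
    (isCompact_Icc.image_of_continuousOn hg).isBounded
  refine le_of_forall_pos_lt_add fun ε hε => ?_
  obtain ⟨δ, hδ, hfine⟩ := exists_upperSum_sub_lowerSum_lt (hH.mono hsub) (hg.mono hsub) hε
  obtain ⟨n, t, hP, hmesh⟩ := exists_isPartition_sub_lt hap hδ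
  calc lowerIntegral g H a q
      ≤ upperSum g H n t + sSup (g '' Icc p q) * (H q - H p) := by
        rw [← hP.last, ← upperSum_update]
        exact lowerIntegral_le_upperSum hH hbdd (hP.update hpq)
    _ < lowerSum g H n t + ε + sSup (g '' Icc p q) * (H q - H p) := by
        linarith [hfine n t hP hmesh]
    _ ≤ lowerIntegral g H a p + sSup (g '' Icc p q) * (H q - H p) + ε := by
        linarith [lowerSum_le_lowerIntegral (hH.mono hsub) (hbdd.subset (image_mono hsub)) hP]

theorem abs_lowerIntegral_sub_le (hap : a ≤ p) (hpq : p ≤ q) (hH : MonotoneOn H (Icc a q))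
    (hg : ContinuousOn g (Icc a q)) {c : ℝ} (hc : ∀ x ∈ Icc p q, |g x| ≤ c) :
    |lowerIntegral g H a q - lowerIntegral g H a p| ≤ c * (H q - H p) := by
  have hne : (Icc p q).Nonempty := nonempty_Icc.2 hpq
  have hΔ : 0 ≤ H q - H p := sub_nonneg.2 <|
    hH ⟨hap, hpq⟩ ⟨hap.trans hpq, le_rfl⟩ hpq
  have hinf : -c ≤ sInf (g '' Icc p q) :=
    le_csInf (hne.image g) fun _ ⟨x, hx, hgx⟩ => hgx ▸ neg_le_of_abs_le (hc x hx)
  have hsup : sSup (g '' Icc p q) ≤ c :=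
    csSup_le (hne.image g) fun _ ⟨x, hx, hgx⟩ => hgx ▸ le_of_abs_le (hc x hx)
  have hlow := lowerIntegral_add_sInf_mul_le hap hpq hH
    (isCompact_Icc.image_of_continuousOn hg).isBounded
  have hup := lowerIntegral_le_add_sSup_mul hap hpq hH hg
  rw [abs_le]
  constructor <;> nlinarith

end DarbouxIntegral

theorem sum_range_mul_sub_by_parts {R : Type*} [CommRing R] (x y : ℕ → R) (n : ℕ) :
    ∑ i ∈ Finset.range n, x (i + 1) * (y (i + 1) - y i)
      = x (n + 1) * y n - x 0 * y 0 - ∑ j ∈ Finset.range (n + 1), y j * (x (j + 1) - x j) := by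
  induction n with
  | zero => simp; ring
  | succ n ih => rw [Finset.sum_range_succ, ih, Finset.sum_range_succ _ (n + 1)]; ring

/-- The partition `a ≤ ξ 0 ≤ ⋯ ≤ ξ (n-1) ≤ b` whose points are the tags of a tagged partition
`(t, ξ)`; the points of `t` are then tags for it. -/
def dualPartition (a b : ℝ) (n : ℕ) (ξ : ℕ → ℝ) : ℕ → ℝ
  | 0 => a
  | i + 1 => if i < n then ξ i else b

section DualPartition

variable {a b : ℝ} {n : ℕ} {t ξ : ℕ → ℝ}

theorem rsSum_eq_sub_rsSum_dualPartition (f g : ℝ → ℝ) (h0 : t 0 = a) (hn : t n = b) :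
    rsSum f g n t ξ = f b * g b - f a * g a - rsSum g f (n + 1) (dualPartition a b n ξ) t := by
  have hξ : rsSum f g n t ξ
      = ∑ i ∈ Finset.range n, f (dualPartition a b n ξ (i + 1)) * (g (t (i + 1)) - g (t i)) :=
    Finset.sum_congr rfl fun i hi => by simp [dualPartition, Finset.mem_range.1 hi]
  rw [hξ, sum_range_mul_sub_by_parts (fun j => f (dualPartition a b n ξ j)) (fun j => g (t j))]
  simp [dualPartition, rsSum, h0, hn]

theorem mem_Icc_dualPartition (hP : IsPartition a b n t)
    (hξ : ∀ i < n, ξ i ∈ Icc (t i) (t (i + 1))) {j : ℕ} (hj : j ≤ n) :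
    t j ∈ Icc (dualPartition a b n ξ j) (dualPartition a b n ξ (j + 1)) := by
  cases j with
  | zero =>
    refine ⟨hP.first.ge, ?_⟩
    by_cases h : 0 < n
    · simpa [dualPartition, h] using (hξ 0 h).1
    · simp [dualPartition, ← hP.last, show n = 0 by omega]
  | succ k =>
    refine ⟨by simpa [dualPartition, show k < n by omega] using (hξ k (by omega)).2, ?_⟩
    by_cases h : k + 1 < n
    · simpa [dualPartition, h] using (hξ (k + 1) h).1
    · simp [dualPartition, ← hP.last, show k + 1 = n by omega]

theorem isPartition_dualPartition (hP : IsPartition a b n t)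
    (hξ : ∀ i < n, ξ i ∈ Icc (t i) (t (i + 1))) :
    IsPartition a b (n + 1) (dualPartition a b n ξ) where
  first := rfl
  last := by simp [dualPartition]
  le_succ j hj := by
    have := mem_Icc_dualPartition hP hξ (Nat.lt_succ_iff.1 hj)
    exact this.1.trans this.2

theorem dualPartition_sub_lt (hP : IsPartition a b n t)
    (hξ : ∀ i < n, ξ i ∈ Icc (t i) (t (i + 1))) {δ : ℝ} (hδ : 0 < δ)
    (hmesh : ∀ i < n, t (i + 1) - t i < δ) {j : ℕ} (hj : j < n + 1) :
    dualPartition a b n ξ (j + 1) - dualPartition a b n ξ j < 2 * δ := by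
  cases j with
  | zero =>
    by_cases h : 0 < n
    · simp only [dualPartition, h, if_true]
      linarith [(hξ 0 h).2, hmesh 0 h, hP.first]
    · simp [dualPartition, ← hP.last, ← hP.first, show n = 0 by omega, hδ]
  | succ k =>
    have hk : k < n := by omega
    by_cases h : k + 1 < n
    · simp only [dualPartition, h, hk, if_true]
      linarith [(hξ k hk).1, (hξ (k + 1) h).2, hmesh k hk, hmesh (k + 1) h]
    · simp only [dualPartition, h, hk, if_true, if_false]
      have hb : t (k + 1) = b := by rw [show k + 1 = n by omega, hP.last]
      linarith [(hξ k hk).1, hmesh k hk]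

end DualPartition

theorem isRSIntegral_of_monotoneOn_of_continuousOn {H g : ℝ → ℝ} {a b : ℝ}
    (hH : MonotoneOn H (Icc a b)) (hg : ContinuousOn g (Icc a b)) :
    IsRSIntegral H g a b (H b * g b - H a * g a - lowerIntegral g H a b) := by
  intro ε hε
  obtain ⟨δ, hδ, hfine⟩ := exists_upperSum_sub_lowerSum_lt hH hg hε
  refine ⟨δ / 2, by positivity, fun n t ξ h0 hn hmono hξ hmesh => ?_⟩
  have hP : IsPartition a b n t := ⟨h0, hn, hmono⟩
  have hbdd : Bornology.IsBounded (g '' Icc a b) :=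
    (isCompact_Icc.image_of_continuousOn hg).isBounded
  have hdual := isPartition_dualPartition hP hξ
  have htags : ∀ j < n + 1, t j ∈ Icc (dualPartition a b n ξ j) (dualPartition a b n ξ (j + 1)) :=
    fun j hj => mem_Icc_dualPartition hP hξ (Nat.lt_succ_iff.1 hj)
  have hclose := hfine (n + 1) _ hdual fun j hj => by
    linarith [dualPartition_sub_lt hP hξ (half_pos hδ) hmesh hj]
  have h₁ := lowerSum_le_rsSum hH hbdd.bddBelow hdual htags
  have h₂ := rsSum_le_upperSum hH hbdd.bddAbove hdual htags
  have h₃ := lowerSum_le_lowerIntegral hH hbdd hdual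
  have h₄ := lowerIntegral_le_upperSum hH hbdd hdual
  rw [rsSum_eq_sub_rsSum_dualPartition H g h0 hn, abs_lt]
  constructor <;> linarith

theorem IsRSIntegral.unique {f g : ℝ → ℝ} {a b I I' : ℝ} (hab : a ≤ b)
    (h : IsRSIntegral f g a b I) (h' : IsRSIntegral f g a b I') : I = I' := by
  refine eq_of_forall_dist_le fun ε hε => ?_
  obtain ⟨δ, hδ, hI⟩ := h (ε / 2) (half_pos hε)
  obtain ⟨δ', hδ', hI'⟩ := h' (ε / 2) (half_pos hε)
  obtain ⟨n, t, hP, hmesh⟩ := exists_isPartition_sub_lt hab (lt_min hδ hδ')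
  have htags : ∀ i < n, t i ∈ Icc (t i) (t (i + 1)) := fun i hi => ⟨le_rfl, hP.le_succ i hi⟩
  have h₁ := hI n t t hP.first hP.last hP.le_succ htags
    fun i hi => (hmesh i hi).trans_le (min_le_left _ _)
  have h₂ := hI' n t t hP.first hP.last hP.le_succ htags
    fun i hi => (hmesh i hi).trans_le (min_le_right _ _)
  rw [abs_lt] at h₁ h₂
  rw [Real.dist_eq, abs_le]
  constructor <;> linarith

theorem IsImproperRSIntegral.unique {f g : ℝ → ℝ} {a I I' : ℝ}
    (h : IsImproperRSIntegral f g a I) (h' : IsImproperRSIntegral f g a I') : I = I' := by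
  obtain ⟨F, hF, hFI⟩ := h
  obtain ⟨F', hF', hFI'⟩ := h'
  have hFF' : F =ᶠ[atTop] F' := eventually_atTop.2
    ⟨a + 1, fun b hb => (hF b (by linarith)).unique (by linarith) (hF' b (by linarith))⟩
  exact tendsto_nhds_unique (hFI.congr' hFF') hFI'

section Improper

variable {H g : ℝ → ℝ} {a M : ℝ}

theorem exists_tendsto_lowerIntegral_atTop (hH : MonotoneOn H (Ici a))
    (hM : ∀ x ∈ Ici a, H x ≤ M) (hg : ContinuousOn g (Ici a)) (hg₀ : Tendsto g atTop (nhds 0)) :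
    ∃ L, Tendsto (fun b => lowerIntegral g H a b) atTop (nhds L) := by
  refine cauchySeq_tendsto_of_complete (Metric.cauchySeq_iff'.2 fun ε hε => ?_)
  have hMa : H a ≤ M := hM a self_mem_Ici
  set c := ε / (M - H a + 1)
  have hc : 0 < c := div_pos hε (by linarith)
  obtain ⟨B, hB⟩ := eventually_atTop.1 (hg₀.eventually (Metric.closedBall_mem_nhds 0 hc))
  refine ⟨max a B, fun q hq => ?_⟩
  have hap : a ≤ max a B := le_max_left _ _
  have hpq : max a B ≤ q := hq
  have hbound := abs_lowerIntegral_sub_le hap hpq (hH.mono Icc_subset_Ici_self)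
    (hg.mono Icc_subset_Ici_self) fun x hx => by
      simpa using hB x ((le_max_right _ _).trans hx.1)
  have hΔ : H q - H (max a B) ≤ M - H a := by
    linarith [hM q (hap.trans hpq), hH self_mem_Ici hap hap]
  rw [Real.dist_eq]
  calc _ ≤ c * (H q - H (max a B)) := hbound
    _ ≤ c * (M - H a) := by gcongr
    _ < c * (M - H a + 1) := by gcongr; linarith
    _ = ε := div_mul_cancel₀ ε (by linarith)

theorem isImproperRSIntegral_of_tendsto_lowerIntegral (hH : MonotoneOn H (Ici a))
    (hM : ∀ x ∈ Ici a, H x ≤ M) (hg : ContinuousOn g (Ici a)) (hg₀ : Tendsto g atTop (nhds 0))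
    {L : ℝ} (hL : Tendsto (fun b => lowerIntegral g H a b) atTop (nhds L)) :
    IsImproperRSIntegral H g a (-(H a * g a) - L) := by
  refine ⟨fun b => H b * g b - H a * g a - lowerIntegral g H a b, fun b _ =>
    isRSIntegral_of_monotoneOn_of_continuousOn (hH.mono Icc_subset_Ici_self)
      (hg.mono Icc_subset_Ici_self), ?_⟩
  have hHg : Tendsto (fun b => H b * g b) atTop (nhds 0) := by
    refine (hg₀.zero_mul_isBoundedUnder_le ?_).congr fun b => mul_comm _ _
    refine isBoundedUnder_of_eventually_le (a := max M (-H a))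
      (eventually_atTop.2 ⟨a, fun b hb => ?_⟩)
    simp only [Function.comp_apply, Real.norm_eq_abs, abs_le]
    constructor <;> linarith [hM b hb, hH self_mem_Ici hb hb, le_max_left M (-H a),
      le_max_right M (-H a)]
  simpa using (hHg.sub_const (H a * g a)).sub hL

end Improper

theorem rs_improper_monotone_nondecreasing_general
    (a : ℝ)
    (H G₁ G₂ : ℝ → ℝ)
    (hH_mono : MonotoneOn H (Set.Ici a))
    (hH_bdd : ∃ M, ∀ x ∈ Set.Ici a, |H x| ≤ M)
    (hH_nonneg : ∀ x ∈ Set.Ici a, 0 ≤ H x)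
    (hG₁_cont : ContinuousOn G₁ (Set.Ici a))
    (hG₂_cont : ContinuousOn G₂ (Set.Ici a))
    (hG₁_lim : Filter.Tendsto G₁ Filter.atTop (nhds 0))
    (hG₂_lim : Filter.Tendsto G₂ Filter.atTop (nhds 0)) :
    (∃ I₁, IsImproperRSIntegral H (fun x => -G₁ x) a I₁) ∧
    (∃ I₂, IsImproperRSIntegral H (fun x => -G₂ x) a I₂) ∧
    ((∀ x ∈ Set.Ici a, G₁ x ≤ G₂ x) →
      ∀ I₁ I₂, IsImproperRSIntegral H (fun x => -G₁ x) a I₁ →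
        IsImproperRSIntegral H (fun x => -G₂ x) a I₂ → I₁ ≤ I₂) := by
  obtain ⟨M, hM⟩ := hH_bdd
  have hHM : ∀ x ∈ Ici a, H x ≤ M := fun x hx => (le_abs_self _).trans (hM x hx)
  have hc₁ : ContinuousOn (fun x => -G₁ x) (Ici a) := hG₁_cont.neg
  have hc₂ : ContinuousOn (fun x => -G₂ x) (Ici a) := hG₂_cont.neg
  have hG₁ : Tendsto (fun x => -G₁ x) atTop (nhds 0) := by simpa using hG₁_lim.neg
  have hG₂ : Tendsto (fun x => -G₂ x) atTop (nhds 0) := by simpa using hG₂_lim.neg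
  obtain ⟨L₁, hL₁⟩ := exists_tendsto_lowerIntegral_atTop hH_mono hHM hc₁ hG₁
  obtain ⟨L₂, hL₂⟩ := exists_tendsto_lowerIntegral_atTop hH_mono hHM hc₂ hG₂
  have hI₁ := isImproperRSIntegral_of_tendsto_lowerIntegral hH_mono hHM hc₁ hG₁ hL₁
  have hI₂ := isImproperRSIntegral_of_tendsto_lowerIntegral hH_mono hHM hc₂ hG₂ hL₂
  refine ⟨⟨_, hI₁⟩, ⟨_, hI₂⟩, fun hle I₁ I₂ h₁ h₂ => ?_⟩
  rw [h₁.unique hI₁, h₂.unique hI₂]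
  have hbdd : ∀ g : ℝ → ℝ, ContinuousOn g (Ici a) → ∀ b, Bornology.IsBounded (g '' Icc a b) :=
    fun g hg b => (isCompact_Icc.image_of_continuousOn (hg.mono Icc_subset_Ici_self)).isBounded
  have hL : L₂ ≤ L₁ := le_of_tendsto_of_tendsto hL₂ hL₁ <| eventually_atTop.2 ⟨a, fun b hb =>
    lowerIntegral_mono hb (hH_mono.mono Icc_subset_Ici_self) (hbdd _ hc₂ b) (hbdd _ hc₁ b)
      fun x hx => neg_le_neg (hle x hx.1)⟩
  have hHa : H a * G₁ a ≤ H a * G₂ a :=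
    mul_le_mul_of_nonneg_left (hle a self_mem_Ici) (hH_nonneg a self_mem_Ici)
  linarith

/-- If `a > 0`, `H` is non-decreasing, bounded and non-negative on
`[a,∞)`, and `G₁, G₂` are continuous, of bounded variation on `[a,∞)` and tend to `0`
at `∞`, then the improper Riemann–Stieltjes integrals `∫_a^∞ H(x) d[-Gᵢ(x)]` exist,
and if `G₁ ≤ G₂` on `[a,∞)` then `∫_a^∞ H(x) d[-G₁(x)] ≤ ∫_a^∞ H(x) d[-G₂(x)]`. -/
theorem rs_improper_monotone_nondecreasing
    (a : ℝ) (ha : 0 < a)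
    (H G₁ G₂ : ℝ → ℝ)
    (hH_mono : MonotoneOn H (Set.Ici a))
    (hH_bdd : ∃ M, ∀ x ∈ Set.Ici a, |H x| ≤ M)
    (hH_nonneg : ∀ x ∈ Set.Ici a, 0 ≤ H x)
    (hG₁_cont : ContinuousOn G₁ (Set.Ici a))
    (hG₁_bv : BoundedVariationOn G₁ (Set.Ici a))
    (hG₂_cont : ContinuousOn G₂ (Set.Ici a))
    (hG₂_bv : BoundedVariationOn G₂ (Set.Ici a))
    (hG₁_lim : Filter.Tendsto G₁ Filter.atTop (nhds 0))
    (hG₂_lim : Filter.Tendsto G₂ Filter.atTop (nhds 0)) :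
    (∃ I₁, IsImproperRSIntegral H (fun x => -G₁ x) a I₁) ∧
    (∃ I₂, IsImproperRSIntegral H (fun x => -G₂ x) a I₂) ∧
    ((∀ x ∈ Set.Ici a, G₁ x ≤ G₂ x) →
      ∀ I₁ I₂, IsImproperRSIntegral H (fun x => -G₁ x) a I₁ →
        IsImproperRSIntegral H (fun x => -G₂ x) a I₂ → I₁ ≤ I₂) :=
  rs_improper_monotone_nondecreasing_general a H G₁ G₂ hH_mono hH_bdd hH_nonneg hG₁_cont hG₂_cont
    hG₁_lim hG₂_lim
end
end

section
/- Let h : (0,∞) → ℝ be positive, non-decreasing and bounded, and let f₁, f₂ : (0,∞) → ℝ be measurable, non-negative, locally integrable functions with ∫_0^∞ f₁(y) dy = ∫_0^∞ f₂(y) dy = ∞. Define I(f) = ∫_0^∞ h(x) f(x) exp(−∫_0^x f(y) dy) dx. If f₁(x) ≤ f₂(x) for almost every x > 0, then I(f₁) ≥ I(f₂). -/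
open Set Filter MeasureTheory

open scoped ENNReal Topology

lemma aux_icc (f : ℝ → ℝ) (hloc : ∀ x, 0 < x → IntegrableOn f (Set.Ioo 0 x)) (b : ℝ) :
    IntegrableOn f (Set.Icc 0 b) := by
  by_cases hb : 0 < b
  · rw [integrableOn_Icc_iff_integrableOn_Ioo]
    exact (hloc (b+1) (by linarith)).mono_set (Set.Ioo_subset_Ioo le_rfl (by linarith))
  · have hnull : volume (Set.Icc (0:ℝ) b) = 0 := by
      refine measure_mono_null (fun x hx => ?_) (measure_singleton (0:ℝ))
      have : x = 0 := le_antisymm (hx.2.trans (not_lt.1 hb)) hx.1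
      simp [this]
    rw [IntegrableOn, Measure.restrict_eq_zero.mpr hnull]
    exact integrable_zero_measure

lemma aux_F_zero (f : ℝ → ℝ) {x : ℝ} (hx : x ≤ 0) : (∫ y in Set.Ioo 0 x, f y) = 0 := by
  rw [Set.Ioo_eq_empty (not_lt.mpr hx)]
  simp

lemma aux_F_nonneg (f : ℝ → ℝ) (hnn : ∀ x, 0 < x → 0 ≤ f x) (x : ℝ) :
    0 ≤ ∫ y in Set.Ioo 0 x, f y :=
  setIntegral_nonneg measurableSet_Ioo (fun y hy => hnn y hy.1)

lemma aux_F_mono (f : ℝ → ℝ) (hnn : ∀ x, 0 < x → 0 ≤ f x)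
    (hloc : ∀ x, 0 < x → IntegrableOn f (Set.Ioo 0 x)) :
    Monotone (fun x => ∫ y in Set.Ioo 0 x, f y) := by
  intro x y hxy
  by_cases hy : 0 < y
  · exact setIntegral_mono_set (hloc y hy)
      (((ae_restrict_iff' measurableSet_Ioo).2 (ae_of_all _ fun z hz => hnn z hz.1)))
      (HasSubset.Subset.eventuallyLE (Set.Ioo_subset_Ioo le_rfl hxy))
  · have hx : x ≤ 0 := hxy.trans (not_lt.1 hy)
    simp only [aux_F_zero f hx, aux_F_zero f (not_lt.1 hy)]
    exact le_rfl

lemma aux_F_meas (f : ℝ → ℝ) (hnn : ∀ x, 0 < x → 0 ≤ f x)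
    (hloc : ∀ x, 0 < x → IntegrableOn f (Set.Ioo 0 x)) :
    Measurable (fun x => ∫ y in Set.Ioo 0 x, f y) :=
  (aux_F_mono f hnn hloc).measurable

lemma aux_F_cont (f : ℝ → ℝ) (hloc : ∀ x, 0 < x → IntegrableOn f (Set.Ioo 0 x)) :
    ContinuousOn (fun x => ∫ y in Set.Ioo 0 x, f y) (Set.Ici 0) := by
  have heq : (fun x => ∫ y in Set.Ioo 0 x, f y) = fun x => ∫ y in Set.Ioc 0 x, f y := by
    funext x; rw [integral_Ioc_eq_integral_Ioo]
  rw [heq]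
  intro c hc
  have h1 : ContinuousOn (fun x => ∫ t in Set.Ioc 0 x, f t) (Set.Icc 0 (c+1)) :=
    intervalIntegral.continuousOn_primitive (aux_icc f hloc (c+1))
  have h2 := h1 c ⟨hc, by simp [Set.mem_Ici] at hc; linarith⟩
  apply h2.mono_of_mem_nhdsWithin
  have : Set.Ici (0:ℝ) ∩ Set.Iio (c+1) ∈ 𝓝[Set.Ici 0] c :=
    inter_mem self_mem_nhdsWithin (mem_nhdsWithin_of_mem_nhds (Iio_mem_nhds (by linarith)))
  exact Filter.mem_of_superset this (fun x hx => ⟨hx.1, hx.2.le⟩)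

lemma aux_F_add (f : ℝ → ℝ) (hloc : ∀ x, 0 < x → IntegrableOn f (Set.Ioo 0 x))
    {a b : ℝ} (ha : 0 ≤ a) (hab : a ≤ b) :
    (∫ y in Set.Ioo a b, f y)
      = (∫ y in Set.Ioo 0 b, f y) - ∫ y in Set.Ioo 0 a, f y := by
  have h1 : (∫ y in Set.Ioo 0 b, f y) = ∫ y in Set.Ioc 0 b, f y :=
    (integral_Ioc_eq_integral_Ioo).symm
  have h2 : (∫ y in Set.Ioo 0 a, f y) = ∫ y in Set.Ioc 0 a, f y :=
    (integral_Ioc_eq_integral_Ioo).symm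
  have h3 : (∫ y in Set.Ioo a b, f y) = ∫ y in Set.Ioc a b, f y :=
    (integral_Ioc_eq_integral_Ioo).symm
  rw [h1, h2, h3]
  have hu : Set.Ioc 0 a ∪ Set.Ioc a b = Set.Ioc 0 b := Set.Ioc_union_Ioc_eq_Ioc ha hab
  have hint : ∫ y in Set.Ioc 0 a ∪ Set.Ioc a b, f y
      = (∫ y in Set.Ioc 0 a, f y) + ∫ y in Set.Ioc a b, f y := by
    apply setIntegral_union (Set.Ioc_disjoint_Ioc_of_le le_rfl) measurableSet_Ioc
    · exact (aux_icc f hloc b).mono_set (fun y hy => ⟨hy.1.le, hy.2.trans hab⟩)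
    · exact (aux_icc f hloc b).mono_set (fun y hy => ⟨ha.trans hy.1.le, hy.2⟩)
  rw [hu] at hint
  linarith

lemma aux_expInt (c : ℝ) :
    ∫⁻ t in Set.Ioi c, ENNReal.ofReal (Real.exp (-t)) = ENNReal.ofReal (Real.exp (-c)) := by
  have hint : IntegrableOn (fun t => Real.exp (-t)) (Set.Ioi c) := by
    have := exp_neg_integrableOn_Ioi c (b := 1) one_pos
    simpa using this
  rw [← ofReal_integral_eq_lintegral_ofReal hint (ae_of_all _ fun t => (Real.exp_pos _).le),
    integral_exp_neg_Ioi]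

lemma aux_gamma : ∫⁻ t : ℝ, ENNReal.ofReal (Real.exp (-t)) * ENNReal.ofReal t = 1 := by
  have hind : ∀ t : ℝ, ENNReal.ofReal (Real.exp (-t)) * ENNReal.ofReal t
      = (Set.Ioi (0:ℝ)).indicator (fun t => ENNReal.ofReal (Real.exp (-t) * t)) t := by
    intro t
    by_cases ht : 0 < t
    · rw [Set.indicator_of_mem (Set.mem_Ioi.2 ht), ENNReal.ofReal_mul (Real.exp_pos (-t)).le]
    · rw [Set.indicator_of_notMem (by simpa using ht),
        ENNReal.ofReal_eq_zero.2 (not_lt.1 ht), mul_zero]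
  simp_rw [hind]
  rw [lintegral_indicator measurableSet_Ioi]
  have hint : IntegrableOn (fun t : ℝ => Real.exp (-t) * t) (Set.Ioi 0) := by
    have := Real.GammaIntegral_convergent (s := 2) (by norm_num)
    norm_num [Real.rpow_one] at this
    exact this
  rw [← ofReal_integral_eq_lintegral_ofReal hint
    ((ae_restrict_iff' measurableSet_Ioi).2
      (ae_of_all _ fun t ht => mul_nonneg (Real.exp_pos _).le (le_of_lt ht)))]
  have hg : (∫ t in Set.Ioi (0:ℝ), Real.exp (-t) * t) = Real.Gamma 2 := by
    rw [Real.Gamma_eq_integral (by norm_num : (0:ℝ) < 2)]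
    norm_num
  rw [hg, Real.Gamma_two, ENNReal.ofReal_one]

lemma aux_stepD {r : ℝ} :
    ∫⁻ t : ℝ, ENNReal.ofReal (Real.exp (-t)) * ENNReal.ofReal (t - r)
      = ENNReal.ofReal (Real.exp (-r)) := by
  have key : (∫⁻ t : ℝ, ENNReal.ofReal (Real.exp (-t)) * ENNReal.ofReal (t - r))
      = ∫⁻ t : ℝ, ENNReal.ofReal (Real.exp (-(t + r))) * ENNReal.ofReal ((t + r) - r) :=
    (lintegral_add_right_eq_self
      (fun t => ENNReal.ofReal (Real.exp (-t)) * ENNReal.ofReal (t - r)) r).symm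
  rw [key]
  have h3 : ∀ t : ℝ, ENNReal.ofReal (Real.exp (-(t + r))) * ENNReal.ofReal ((t + r) - r)
      = ENNReal.ofReal (Real.exp (-r)) * (ENNReal.ofReal (Real.exp (-t)) * ENNReal.ofReal t) := by
    intro t
    rw [add_sub_cancel_right, neg_add, Real.exp_add, ENNReal.ofReal_mul (Real.exp_nonneg _)]
    ring
  simp_rw [h3]
  rw [lintegral_const_mul' _ _ ENNReal.ofReal_ne_top, aux_gamma, mul_one]

lemma aux_key (f : ℝ → ℝ) (hmeas : Measurable f) (hnn : ∀ x, 0 < x → 0 ≤ f x)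
    (hloc : ∀ x, 0 < x → IntegrableOn f (Set.Ioo 0 x))
    (hdiv : Tendsto (fun x => ∫ y in Set.Ioo 0 x, f y) atTop atTop)
    {a : ℝ} (ha : 0 ≤ a) :
    ∫⁻ x in Set.Ioi a, ENNReal.ofReal (f x * Real.exp (-(∫ y in Set.Ioo 0 x, f y)))
      = ENNReal.ofReal (Real.exp (-(∫ y in Set.Ioo 0 a, f y))) := by
  set F : ℝ → ℝ := fun x => ∫ y in Set.Ioo 0 x, f y with hF
  have hFmono : Monotone F := aux_F_mono f hnn hloc
  have hFmeas : Measurable F := hFmono.measurable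
  have hFnn : ∀ x, 0 ≤ F x := aux_F_nonneg f hnn
  have hFcont : ContinuousOn F (Set.Ici 0) := aux_F_cont f hloc
  set S : Set (ℝ × ℝ) := {p : ℝ × ℝ | a < p.1 ∧ F p.1 < p.2} with hSdef
  have hSm : MeasurableSet S := by
    have m1 : MeasurableSet {p : ℝ × ℝ | a < p.1} :=
      measurableSet_lt measurable_const measurable_fst
    have m2 : MeasurableSet {p : ℝ × ℝ | F p.1 < p.2} :=
      measurableSet_lt (hFmeas.comp measurable_fst) measurable_snd
    exact m1.inter m2
  set k : ℝ → ℝ → ℝ≥0∞ := fun x t =>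
    S.indicator (fun p => ENNReal.ofReal (f p.1) * ENNReal.ofReal (Real.exp (-p.2))) (x, t)
    with hk
  have hkm : Measurable (Function.uncurry k) := by
    apply Measurable.indicator ?_ hSm
    exact ((ENNReal.measurable_ofReal.comp (hmeas.comp measurable_fst))).mul
      (ENNReal.measurable_ofReal.comp ((Real.continuous_exp.measurable).comp measurable_snd.neg))
  have stepA : (∫⁻ x in Set.Ioi a, ENNReal.ofReal (f x * Real.exp (-(F x))))
      = ∫⁻ x : ℝ, ∫⁻ t : ℝ, k x t := by
    rw [← lintegral_indicator measurableSet_Ioi]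
    apply lintegral_congr
    intro x
    by_cases hx : a < x
    · have hxpos : 0 < x := lt_of_le_of_lt ha hx
      have hke : ∀ t, k x t = (Set.Ioi (F x)).indicator
          (fun t => ENNReal.ofReal (f x) * ENNReal.ofReal (Real.exp (-t))) t := by
        intro t
        show S.indicator (fun p => ENNReal.ofReal (f p.1) * ENNReal.ofReal (Real.exp (-p.2))) (x, t) = _
        by_cases hFt : F x < t
        · rw [Set.indicator_of_mem (show (x,t) ∈ S from ⟨hx, hFt⟩),
            Set.indicator_of_mem (Set.mem_Ioi.2 hFt)]
        · rw [Set.indicator_of_notMem (show (x,t) ∉ S from fun hc => hFt hc.2),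
            Set.indicator_of_notMem (show t ∉ Set.Ioi (F x) by simpa using hFt)]
      rw [lintegral_congr hke, lintegral_indicator measurableSet_Ioi,
        lintegral_const_mul _ (show Measurable fun t : ℝ => ENNReal.ofReal (Real.exp (-t)) by fun_prop),
        aux_expInt, Set.indicator_of_mem (Set.mem_Ioi.2 hx),
        ENNReal.ofReal_mul (hnn x hxpos)]
    · have hke : ∀ t, k x t = 0 :=
        fun t => Set.indicator_of_notMem (show (x,t) ∉ S from fun hc => hx hc.1) _
      rw [Set.indicator_of_notMem (by simpa using hx), lintegral_congr hke, lintegral_zero]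
  have stepB : (∫⁻ x : ℝ, ∫⁻ t : ℝ, k x t) = ∫⁻ t : ℝ, ∫⁻ x : ℝ, k x t :=
    lintegral_lintegral_swap hkm.aemeasurable
  have stepC : ∀ t : ℝ, (∫⁻ x : ℝ, k x t)
      = ENNReal.ofReal (Real.exp (-t)) * ENNReal.ofReal (t - F a) := by
    intro t
    have hTm : MeasurableSet {x : ℝ | a < x ∧ F x < t} := by
      have hTe : {x : ℝ | a < x ∧ F x < t} = Set.Ioi a ∩ F ⁻¹' (Set.Iio t) := rfl
      rw [hTe]; exact measurableSet_Ioi.inter (hFmeas measurableSet_Iio)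
    have hke : ∀ x, k x t = {x : ℝ | a < x ∧ F x < t}.indicator
        (fun x => ENNReal.ofReal (Real.exp (-t)) * ENNReal.ofReal (f x)) x := by
      intro x
      show S.indicator (fun p => ENNReal.ofReal (f p.1) * ENNReal.ofReal (Real.exp (-p.2))) (x, t) = _
      by_cases hx : a < x ∧ F x < t
      · rw [Set.indicator_of_mem (show (x,t) ∈ S from hx),
          Set.indicator_of_mem (show x ∈ {x : ℝ | a < x ∧ F x < t} from hx)]
        ring
      · rw [Set.indicator_of_notMem (show (x,t) ∉ S from hx),
          Set.indicator_of_notMem (show x ∉ {x : ℝ | a < x ∧ F x < t} from hx)]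
    rw [lintegral_congr hke, lintegral_indicator hTm,
      lintegral_const_mul _ (show Measurable fun x : ℝ => ENNReal.ofReal (f x) from hmeas.ennreal_ofReal)]
    congr 1
    by_cases ht : F a < t
    · set c := sSup {x : ℝ | F x < t} with hc
      have hne : a ∈ {x : ℝ | F x < t} := ht
      obtain ⟨X, hX⟩ := (hdiv.eventually_ge_atTop t).exists
      have hbdd : BddAbove {x : ℝ | F x < t} := by
        refine ⟨X, fun s hs => ?_⟩
        by_contra hsX
        push_neg at hsX
        have : t ≤ F s := hX.trans (hFmono hsX.le)
        exact absurd hs (not_lt.2 this)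
      have hac : a < c := by
        have hcw : ContinuousWithinAt F (Set.Ici 0) a := hFcont a ha
        have hmem : F ⁻¹' (Set.Iio t) ∈ 𝓝[Set.Ici 0] a := hcw (Iio_mem_nhds ht)
        have hsub : 𝓝[Set.Ioi a] a ≤ 𝓝[Set.Ici 0] a :=
          nhdsWithin_mono a (fun x hx => le_trans ha (le_of_lt hx))
        have hmem2 : F ⁻¹' (Set.Iio t) ∩ Set.Ioi a ∈ 𝓝[Set.Ioi a] a :=
          inter_mem (hsub hmem) self_mem_nhdsWithin
        obtain ⟨x, hx1, hx2⟩ := Filter.nonempty_of_mem hmem2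
        exact lt_of_lt_of_le hx2 (le_csSup hbdd hx1)
      have hc0 : 0 < c := lt_of_le_of_lt ha hac
      have hlt_mem : ∀ x, x < c → F x < t := by
        intro x hx
        obtain ⟨s, hs, hxs⟩ := exists_lt_of_lt_csSup ⟨a, hne⟩ hx
        exact lt_of_le_of_lt (hFmono hxs.le) hs
      have hge_mem : ∀ x, c < x → t ≤ F x := by
        intro x hx
        by_contra hcon
        push_neg at hcon
        exact absurd hx (not_lt.2 (le_csSup hbdd hcon))
      have hFc : F c = t := by
        apply le_antisymm
        · have hcw : ContinuousWithinAt F (Set.Ici 0) c := hFcont c hc0.le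
          have h1 : Tendsto F (𝓝[Set.Ico 0 c] c) (𝓝 (F c)) :=
            hcw.mono_left (nhdsWithin_mono c Set.Ico_subset_Ici_self)
          have hIco : 𝓝[Set.Ico 0 c] c = 𝓝[Set.Iio c] c := by
            rw [← Set.Ici_inter_Iio]
            exact nhdsWithin_inter_of_mem
              (mem_nhdsWithin_of_mem_nhds (Ici_mem_nhds hc0))
          rw [hIco] at h1
          exact le_of_tendsto h1
            (Filter.eventually_of_mem self_mem_nhdsWithin (fun x hx => (hlt_mem x hx).le))
        · have hcw : ContinuousWithinAt F (Set.Ici 0) c := hFcont c hc0.le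
          have h1 : Tendsto F (𝓝[Set.Ioi c] c) (𝓝 (F c)) :=
            hcw.mono_left (nhdsWithin_mono c (fun x hx => hc0.le.trans (le_of_lt hx)))
          exact ge_of_tendsto h1
            (Filter.eventually_of_mem self_mem_nhdsWithin (fun x hx => hge_mem x hx))
      have hsub1 : Set.Ioo a c ⊆ {x : ℝ | a < x ∧ F x < t} :=
        fun x hx => ⟨hx.1, hlt_mem x hx.2⟩
      have hsub2 : {x : ℝ | a < x ∧ F x < t} ⊆ Set.Ioc a c :=
        fun x hx => ⟨hx.1, le_csSup hbdd hx.2⟩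
      have hIooIoc : (∫⁻ x in Set.Ioc a c, ENNReal.ofReal (f x))
          = ∫⁻ x in Set.Ioo a c, ENNReal.ofReal (f x) := by
        rw [Measure.restrict_congr_set Ioo_ae_eq_Ioc.symm]
      have hval : (∫⁻ x in Set.Ioo a c, ENNReal.ofReal (f x)) = ENNReal.ofReal (t - F a) := by
        have hint : IntegrableOn f (Set.Ioo a c) :=
          (hloc (c+1) (by linarith)).mono_set
            (fun x hx => ⟨lt_of_le_of_lt ha hx.1, hx.2.trans (by linarith)⟩)
        rw [← ofReal_integral_eq_lintegral_ofReal hint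
          ((ae_restrict_iff' measurableSet_Ioo).2
            (ae_of_all _ fun x hx => hnn x (lt_of_le_of_lt ha hx.1)))]
        rw [aux_F_add f hloc ha hac.le]
        have h5 : (∫ y in Set.Ioo 0 c, f y) = t := hFc
        rw [h5]
      apply le_antisymm
      · calc ∫⁻ x in {x : ℝ | a < x ∧ F x < t}, ENNReal.ofReal (f x)
            ≤ ∫⁻ x in Set.Ioc a c, ENNReal.ofReal (f x) := lintegral_mono_set hsub2
          _ = ENNReal.ofReal (t - F a) := by rw [hIooIoc, hval]
      · calc ENNReal.ofReal (t - F a)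
            = ∫⁻ x in Set.Ioo a c, ENNReal.ofReal (f x) := hval.symm
          _ ≤ _ := lintegral_mono_set hsub1
    · have hempty : {x : ℝ | a < x ∧ F x < t} = ∅ := by
        ext x
        simp only [Set.mem_setOf_eq, Set.mem_empty_iff_false, iff_false, not_and]
        intro hx1
        exact not_lt.2 ((not_lt.1 ht).trans (hFmono hx1.le))
      rw [hempty, ENNReal.ofReal_eq_zero.2 (by linarith [not_lt.1 ht] : t - F a ≤ 0)]
      simp
  rw [stepA, stepB]
  calc (∫⁻ t : ℝ, ∫⁻ x : ℝ, k x t)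
      = ∫⁻ t : ℝ, ENNReal.ofReal (Real.exp (-t)) * ENNReal.ofReal (t - F a) :=
        lintegral_congr stepC
    _ = ENNReal.ofReal (Real.exp (-(F a))) := aux_stepD

/-- Let `h` be positive, non-decreasing and bounded on `(0,∞)` and let
`f₁, f₂` be measurable, non-negative, locally integrable on `(0,∞)` with divergent
integral `∫_0^∞ fᵢ = ∞`. If `f₁ ≤ f₂` a.e. on `(0,∞)`, then
`I(f₁) = ∫_0^∞ h(x) f₁(x) exp(-∫_0^x f₁) dx ≥ ∫_0^∞ h(x) f₂(x) exp(-∫_0^x f₂) dx = I(f₂)`. -/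
theorem functional_I_antitone
    (h f₁ f₂ : ℝ → ℝ)
    (hh_pos : ∀ x, 0 < x → 0 < h x)
    (hh_mono : MonotoneOn h (Set.Ioi 0))
    (hh_bdd : ∃ M, ∀ x, 0 < x → h x ≤ M)
    (hf₁_meas : Measurable f₁)
    (hf₂_meas : Measurable f₂)
    (hf₁_nonneg : ∀ x, 0 < x → 0 ≤ f₁ x)
    (hf₂_nonneg : ∀ x, 0 < x → 0 ≤ f₂ x)
    (hf₁_loc : ∀ x, 0 < x → IntegrableOn f₁ (Set.Ioo 0 x))
    (hf₂_loc : ∀ x, 0 < x → IntegrableOn f₂ (Set.Ioo 0 x))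
    (hf₁_div : Tendsto (fun x => ∫ y in Set.Ioo 0 x, f₁ y) atTop atTop)
    (hf₂_div : Tendsto (fun x => ∫ y in Set.Ioo 0 x, f₂ y) atTop atTop)
    (hle : ∀ᵐ x ∂(volume : Measure ℝ), 0 < x → f₁ x ≤ f₂ x) :
    ∫ x in Set.Ioi 0, h x * f₂ x * Real.exp (-(∫ y in Set.Ioo 0 x, f₂ y)) ≤
      ∫ x in Set.Ioi 0, h x * f₁ x * Real.exp (-(∫ y in Set.Ioo 0 x, f₁ y)) := by
  classical
  obtain ⟨M, hM⟩ := hh_bdd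
  have hM0 : 0 ≤ M := (hh_pos 1 one_pos).le.trans (hM 1 one_pos)
  set F₁ : ℝ → ℝ := fun x => ∫ y in Set.Ioo 0 x, f₁ y with hF₁def
  set F₂ : ℝ → ℝ := fun x => ∫ y in Set.Ioo 0 x, f₂ y with hF₂def
  have hF₁meas : Measurable F₁ := aux_F_meas f₁ hf₁_nonneg hf₁_loc
  have hF₂meas : Measurable F₂ := aux_F_meas f₂ hf₂_nonneg hf₂_loc
  -- monotone extension of h
  have hbdd_below : BddBelow (h '' Set.Ioi 0) := by
    refine ⟨0, fun y hy => ?_⟩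
    obtain ⟨x, hx, rfl⟩ := hy
    exact (hh_pos x hx).le
  set m : ℝ := sInf (h '' Set.Ioi 0) with hm
  have hm0 : 0 ≤ m := by
    apply le_csInf ⟨h 1, Set.mem_image_of_mem h (Set.mem_Ioi.2 one_pos)⟩
    rintro y ⟨z, hz, rfl⟩
    exact (hh_pos z hz).le
  set g : ℝ → ℝ := fun x => if 0 < x then h x else m with hgdef
  have hg_eq : ∀ x, 0 < x → g x = h x := fun x hx => if_pos hx
  have hg_mono : Monotone g := by
    intro x y hxy
    by_cases hx : 0 < x
    · have hy : 0 < y := lt_of_lt_of_le hx hxy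
      simp only [hgdef, if_pos hx, if_pos hy]
      exact hh_mono hx hy hxy
    · by_cases hy : 0 < y
      · simp only [hgdef, if_neg hx, if_pos hy]
        exact csInf_le hbdd_below ⟨y, hy, rfl⟩
      · simp only [hgdef, if_neg hx, if_neg hy, le_refl]
  have hg_meas : Measurable g := hg_mono.measurable
  have hg_nonneg : ∀ x, 0 ≤ g x := by
    intro x
    by_cases hx : 0 < x
    · rw [hg_eq x hx]; exact (hh_pos x hx).le
    · simp only [hgdef, if_neg hx]; exact hm0
  -- F comparison
  have hFle : ∀ c : ℝ, 0 ≤ c → F₁ c ≤ F₂ c := by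
    intro c hc
    rcases eq_or_lt_of_le hc with hc' | hc'
    · simp only [hF₁def, hF₂def, ← hc', aux_F_zero f₁ (le_refl (0:ℝ)), aux_F_zero f₂ (le_refl (0:ℝ))]
      exact le_rfl
    · apply integral_mono_ae (hf₁_loc c hc') (hf₂_loc c hc')
      refine (ae_restrict_iff' measurableSet_Ioo).2 ?_
      filter_upwards [hle] with x hx hxm
      exact hx hxm.1
  -- densities and measures
  set d₁ : ℝ → ℝ≥0∞ := fun x => ENNReal.ofReal (f₁ x * Real.exp (-(F₁ x))) with hd₁def
  set d₂ : ℝ → ℝ≥0∞ := fun x => ENNReal.ofReal (f₂ x * Real.exp (-(F₂ x))) with hd₂def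
  have hd₁ : Measurable d₁ :=
    (hf₁_meas.mul (Real.measurable_exp.comp hF₁meas.neg)).ennreal_ofReal
  have hd₂ : Measurable d₂ :=
    (hf₂_meas.mul (Real.measurable_exp.comp hF₂meas.neg)).ennreal_ofReal
  set μ₁ : Measure ℝ := (volume.restrict (Set.Ioi 0)).withDensity d₁ with hμ₁def
  set μ₂ : Measure ℝ := (volume.restrict (Set.Ioi 0)).withDensity d₂ with hμ₂def
  -- representation of the lintegrals via the measures
  have repr₁ : (∫⁻ x in Set.Ioi 0, ENNReal.ofReal (g x * f₁ x * Real.exp (-(F₁ x))))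
      = ∫⁻ x, ENNReal.ofReal (g x) ∂μ₁ := by
    rw [hμ₁def, lintegral_withDensity_eq_lintegral_mul _ hd₁ hg_meas.ennreal_ofReal]
    apply lintegral_congr_ae
    refine (ae_restrict_iff' measurableSet_Ioi).2 (ae_of_all _ fun x hx => ?_)
    show ENNReal.ofReal (g x * f₁ x * Real.exp (-(F₁ x)))
        = d₁ x * ENNReal.ofReal (g x)
    rw [hd₁def, ← ENNReal.ofReal_mul (mul_nonneg (hf₁_nonneg x hx) (Real.exp_nonneg _))]
    congr 1
    ring
  have repr₂ : (∫⁻ x in Set.Ioi 0, ENNReal.ofReal (g x * f₂ x * Real.exp (-(F₂ x))))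
      = ∫⁻ x, ENNReal.ofReal (g x) ∂μ₂ := by
    rw [hμ₂def, lintegral_withDensity_eq_lintegral_mul _ hd₂ hg_meas.ennreal_ofReal]
    apply lintegral_congr_ae
    refine (ae_restrict_iff' measurableSet_Ioi).2 (ae_of_all _ fun x hx => ?_)
    show ENNReal.ofReal (g x * f₂ x * Real.exp (-(F₂ x)))
        = d₂ x * ENNReal.ofReal (g x)
    rw [hd₂def, ← ENNReal.ofReal_mul (mul_nonneg (hf₂_nonneg x hx) (Real.exp_nonneg _))]
    congr 1
    ring
  -- layer cake
  have layer₁ : (∫⁻ x, ENNReal.ofReal (g x) ∂μ₁) = ∫⁻ t in Set.Ioi 0, μ₁ {a | t < g a} :=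
    lintegral_eq_lintegral_meas_lt μ₁ (ae_of_all _ hg_nonneg) hg_meas.aemeasurable
  have layer₂ : (∫⁻ x, ENNReal.ofReal (g x) ∂μ₂) = ∫⁻ t in Set.Ioi 0, μ₂ {a | t < g a} :=
    lintegral_eq_lintegral_meas_lt μ₂ (ae_of_all _ hg_nonneg) hg_meas.aemeasurable
  -- pointwise comparison of tail measures
  have claim : ∀ t : ℝ, μ₂ {a | t < g a} ≤ μ₁ {a | t < g a} := by
    intro t
    have hTset : MeasurableSet {x : ℝ | t < g x} := measurableSet_lt measurable_const hg_meas
    set T : Set ℝ := {x : ℝ | t < g x} ∩ Set.Ioi 0 with hTdef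
    have happ₁ : μ₁ {x : ℝ | t < g x} = ∫⁻ x in T, d₁ x := by
      rw [hμ₁def, withDensity_apply _ hTset, Measure.restrict_restrict hTset]
    have happ₂ : μ₂ {x : ℝ | t < g x} = ∫⁻ x in T, d₂ x := by
      rw [hμ₂def, withDensity_apply _ hTset, Measure.restrict_restrict hTset]
    rw [happ₁, happ₂]
    by_cases hTne : T.Nonempty
    · set c := sInf T with hcdef
      have hbddb : BddBelow T := ⟨0, fun y hy => (hy.2).le⟩
      have hc0 : 0 ≤ c := le_csInf hTne (fun x hx => le_of_lt hx.2)
      have hTsub : T ⊆ Set.Ici c := fun x hx => csInf_le hbddb hx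
      have hIoiT : Set.Ioi c ⊆ T := by
        intro x hx
        obtain ⟨s, hs, hsx⟩ := exists_lt_of_csInf_lt hTne hx
        exact ⟨lt_of_lt_of_le hs.1 (hg_mono hsx.le), lt_trans hs.2 hsx⟩
      have hTeq : ∀ d : ℝ → ℝ≥0∞, (∫⁻ x in T, d x) = ∫⁻ x in Set.Ioi c, d x := by
        intro d
        apply le_antisymm
        · calc (∫⁻ x in T, d x) ≤ ∫⁻ x in Set.Ici c, d x := lintegral_mono_set hTsub
            _ = ∫⁻ x in Set.Ioi c, d x := by
                rw [Measure.restrict_congr_set Ioi_ae_eq_Ici.symm]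
        · exact lintegral_mono_set hIoiT
      rw [hTeq d₁, hTeq d₂, hd₁def, hd₂def,
        aux_key f₁ hf₁_meas hf₁_nonneg hf₁_loc hf₁_div hc0,
        aux_key f₂ hf₂_meas hf₂_nonneg hf₂_loc hf₂_div hc0]
      apply ENNReal.ofReal_le_ofReal
      apply Real.exp_le_exp.2
      exact neg_le_neg (hFle c hc0)
    · have hTempty : T = ∅ := Set.not_nonempty_iff_eq_empty.1 hTne
      rw [hTempty]
      simp
  -- finiteness of the right-hand side
  have hkey₁0 := aux_key f₁ hf₁_meas hf₁_nonneg hf₁_loc hf₁_div (le_refl (0:ℝ))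
  have hfin : (∫⁻ x in Set.Ioi 0, ENNReal.ofReal (g x * f₁ x * Real.exp (-(F₁ x)))) ≠ ⊤ := by
    have hb : (∫⁻ x in Set.Ioi 0, ENNReal.ofReal (g x * f₁ x * Real.exp (-(F₁ x))))
        ≤ ENNReal.ofReal M * ∫⁻ x in Set.Ioi 0, ENNReal.ofReal (f₁ x * Real.exp (-(F₁ x))) := by
      rw [← lintegral_const_mul' _ _ ENNReal.ofReal_ne_top]
      apply lintegral_mono_ae
      refine (ae_restrict_iff' measurableSet_Ioi).2 (ae_of_all _ fun x hx => ?_)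
      rw [← ENNReal.ofReal_mul hM0]
      apply ENNReal.ofReal_le_ofReal
      rw [hg_eq x hx, ← mul_assoc]
      exact mul_le_mul_of_nonneg_right
        (mul_le_mul_of_nonneg_right (hM x hx) (hf₁_nonneg x hx)) (Real.exp_nonneg _)
    apply ne_top_of_le_ne_top ?_ hb
    rw [hkey₁0]
    exact ENNReal.mul_ne_top ENNReal.ofReal_ne_top ENNReal.ofReal_ne_top
  -- convert Bochner integrals to lintegrals
  have goal_eq₂ : (∫ x in Set.Ioi 0, h x * f₂ x * Real.exp (-(F₂ x)))
      = ∫ x in Set.Ioi 0, g x * f₂ x * Real.exp (-(F₂ x)) := by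
    apply setIntegral_congr_fun measurableSet_Ioi
    intro x hx
    simp only [hg_eq x hx]
  have goal_eq₁ : (∫ x in Set.Ioi 0, h x * f₁ x * Real.exp (-(F₁ x)))
      = ∫ x in Set.Ioi 0, g x * f₁ x * Real.exp (-(F₁ x)) := by
    apply setIntegral_congr_fun measurableSet_Ioi
    intro x hx
    simp only [hg_eq x hx]
  have conv₂ : (∫ x in Set.Ioi 0, g x * f₂ x * Real.exp (-(F₂ x)))
      = (∫⁻ x in Set.Ioi 0, ENNReal.ofReal (g x * f₂ x * Real.exp (-(F₂ x)))).toReal := by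
    apply integral_eq_lintegral_of_nonneg_ae
    · exact (ae_restrict_iff' measurableSet_Ioi).2 (ae_of_all _ fun x hx =>
        mul_nonneg (mul_nonneg (hg_nonneg x) (hf₂_nonneg x hx)) (Real.exp_nonneg _))
    · exact ((hg_meas.mul hf₂_meas).mul
        (Real.measurable_exp.comp hF₂meas.neg)).aestronglyMeasurable
  have conv₁ : (∫ x in Set.Ioi 0, g x * f₁ x * Real.exp (-(F₁ x)))
      = (∫⁻ x in Set.Ioi 0, ENNReal.ofReal (g x * f₁ x * Real.exp (-(F₁ x)))).toReal := by
    apply integral_eq_lintegral_of_nonneg_ae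
    · exact (ae_restrict_iff' measurableSet_Ioi).2 (ae_of_all _ fun x hx =>
        mul_nonneg (mul_nonneg (hg_nonneg x) (hf₁_nonneg x hx)) (Real.exp_nonneg _))
    · exact ((hg_meas.mul hf₁_meas).mul
        (Real.measurable_exp.comp hF₁meas.neg)).aestronglyMeasurable
  rw [goal_eq₂, goal_eq₁, conv₂, conv₁]
  apply ENNReal.toReal_mono hfin
  calc (∫⁻ x in Set.Ioi 0, ENNReal.ofReal (g x * f₂ x * Real.exp (-(F₂ x))))
      = ∫⁻ x, ENNReal.ofReal (g x) ∂μ₂ := repr₂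
    _ = ∫⁻ t in Set.Ioi 0, μ₂ {a | t < g a} := layer₂
    _ ≤ ∫⁻ t in Set.Ioi 0, μ₁ {a | t < g a} := lintegral_mono (fun t => claim t)
    _ = ∫⁻ x, ENNReal.ofReal (g x) ∂μ₁ := layer₁.symm
    _ = _ := repr₁.symm
end

section
/- Let h : (0,∞) → ℝ be positive, strictly increasing and bounded, and let f₁, f₂ : (0,∞) → ℝ be measurable, non-negative, locally integrable functions with ∫_0^∞ f₁(y) dy = ∫_0^∞ f₂(y) dy = ∞. Define I(f) = ∫_0^∞ h(x) f(x) exp(−∫_0^x f(y) dy) dx. If f₁(x) ≤ f₂(x) for almost every x > 0 and ∫_0^x f₁(y) dy < ∫_0^x f₂(y) dy for every x > 0, then I(f₁) > I(f₂). -/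
open Set Filter MeasureTheory Topology

/-!
Write `I(f) = ∫ h dμ_f`, where `μ_f` is the law on `(0,∞)` with survival function
`μ_f (x,∞) = exp (-∫_0^x f)`; this tail formula is the fundamental theorem of calculus for the
absolutely continuous function `exp (-∫_0^x f)`, together with `∫_0^∞ f = ∞`. By the layer-cake
formula `∫ h dμ_f = ∫_0^∞ μ_f {h > t} dt`, and as `h` increases, `{h > t}` is a ray from some
`c ≥ 0`, so `μ_f {h > t} = exp (-∫_0^c f)`. This is larger for `f₁` than for `f₂`, strictly
when `c > 0`, which is the case for every `t` between `h 1` and `h 2`.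
-/

theorem LipschitzOnWith.comp_absolutelyContinuousOnInterval {X Y : Type*} [PseudoMetricSpace X]
    [PseudoMetricSpace Y] {g : X → Y} {K : NNReal} {s : Set X} {f : ℝ → X} {a b : ℝ}
    (hg : LipschitzOnWith K g s) (hf : AbsolutelyContinuousOnInterval f a b)
    (hfs : MapsTo f (uIcc a b) s) : AbsolutelyContinuousOnInterval (g ∘ f) a b := by
  rw [absolutelyContinuousOnInterval_iff] at hf ⊢
  intro ε hε
  obtain ⟨δ, hδ, hfδ⟩ := hf (ε / (K + 1)) (by positivity)
  refine ⟨δ, hδ, fun E hE hEδ => ?_⟩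
  calc ∑ i ∈ Finset.range E.1, dist (g (f (E.2 i).1)) (g (f (E.2 i).2))
      ≤ ∑ i ∈ Finset.range E.1, K * dist (f (E.2 i).1) (f (E.2 i).2) :=
        Finset.sum_le_sum fun i hi =>
          hg.dist_le_mul _ (hfs (hE.1 i hi).1) _ (hfs (hE.1 i hi).2)
    _ = K * ∑ i ∈ Finset.range E.1, dist (f (E.2 i).1) (f (E.2 i).2) := by
        rw [Finset.mul_sum]
    _ ≤ K * (ε / (K + 1)) := by gcongr; exact (hfδ E hE hEδ).le
    _ < (K + 1) * (ε / (K + 1)) := by gcongr; linarith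
    _ = ε := by field_simp

theorem ContDiff.comp_absolutelyContinuousOnInterval {g f : ℝ → ℝ} {a b : ℝ}
    (hg : ContDiff ℝ 1 g) (hf : AbsolutelyContinuousOnInterval f a b) :
    AbsolutelyContinuousOnInterval (g ∘ f) a b := by
  obtain ⟨C, hC⟩ := hf.exists_bound
  obtain ⟨K, hK⟩ := hg.contDiffOn.exists_lipschitzOnWith one_ne_zero (convex_Icc (-C) C)
    isCompact_Icc
  exact hK.comp_absolutelyContinuousOnInterval hf fun x hx => abs_le.1 (hC x hx)

theorem integral_mul_exp_neg_primitive {f : ℝ → ℝ} {a b c : ℝ}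
    (hf : IntervalIntegrable f volume c b) (hca : c ≤ a) (hab : a ≤ b) :
    ∫ x in a..b, f x * Real.exp (-∫ t in c..x, f t) =
      Real.exp (-∫ t in c..a, f t) - Real.exp (-∫ t in c..b, f t) := by
  set G : ℝ → ℝ := fun x => Real.exp (-∫ t in c..x, f t)
  have hsub : uIcc a b ⊆ uIcc c b := uIcc_subset_uIcc (mem_uIcc_of_le hca hab) right_mem_uIcc
  have hG : AbsolutelyContinuousOnInterval G a b :=
    ((Real.contDiff_exp.comp contDiff_neg).comp_absolutelyContinuousOnInterval
      (hf.absolutelyContinuousOnInterval_intervalIntegral left_mem_uIcc)).mono hsub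
  have hderiv : ∀ᵐ x, x ∈ uIoc a b → f x * G x = -deriv G x := by
    filter_upwards [hf.ae_hasDerivAt_integral] with x hx hxab
    have hP := hx (hsub (uIoc_subset_uIcc hxab)) c left_mem_uIcc
    rw [(hP.fun_neg.exp : HasDerivAt G _ x).deriv]
    ring
  rw [intervalIntegral.integral_congr_ae hderiv, intervalIntegral.integral_neg,
    hG.integral_deriv_eq_sub]
  ring

theorem IsUpperSet.measure_eq_measure_Ioi_csInf {α : Type*} [ConditionallyCompleteLinearOrder α]
    [MeasurableSpace α] {μ : Measure α} [NullSingletonClass μ] {U : Set α} (hU : IsUpperSet U)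
    (hne : U.Nonempty) (hbdd : BddBelow U) : μ U = μ (Ioi (sInf U)) := by
  have hIoi : Ioi (sInf U) ⊆ U := fun x hx =>
    let ⟨y, hyU, hyx⟩ := exists_lt_of_csInf_lt hne hx
    hU hyx.le hyU
  refine le_antisymm ?_ (measure_mono hIoi)
  calc μ U ≤ μ (Ici (sInf U)) := measure_mono fun x hx => csInf_le hbdd hx
    _ = μ (Ioi (sInf U)) := measure_congr Ioi_ae_eq_Ici.symm

theorem MonotoneOn.isUpperSet_setOf_lt_inter {α β : Type*} [Preorder α] [Preorder β]
    {h : α → β} {s : Set α} (hs : IsUpperSet s) (hh : MonotoneOn h s) (t : β) :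
    IsUpperSet ({x | t < h x} ∩ s) := fun _ _ hxy hx =>
  ⟨hx.1.trans_le (hh hx.2 (hs hxy hx.2) hxy), hs hxy hx.2⟩

noncomputable def cumulativeHazard (f : ℝ → ℝ) (x : ℝ) : ℝ := ∫ y in Ioo 0 x, f y

structure IsHazardRate (f : ℝ → ℝ) : Prop where
  nonneg : ∀ x, 0 < x → 0 ≤ f x
  integrableOn_Ioo : ∀ x, 0 < x → IntegrableOn f (Ioo 0 x)
  tendsto_cumulativeHazard : Tendsto (cumulativeHazard f) atTop atTop

/-- The measure `d[-exp (-∫_0^x f)]` of the Stieltjes form of `I(f)`: the law of a lifetime with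
hazard rate `f`. -/
noncomputable def lifetimeMeasure (f : ℝ → ℝ) : Measure ℝ :=
  (volume.restrict (Ioi 0)).withDensity fun x =>
    ENNReal.ofReal (f x * Real.exp (-cumulativeHazard f x))

section Lifetime

variable {f : ℝ → ℝ} {a b : ℝ}

@[simp]
theorem cumulativeHazard_zero : cumulativeHazard f 0 = 0 := by
  simp [cumulativeHazard]

theorem cumulativeHazard_eq_intervalIntegral (ha : 0 ≤ a) :
    cumulativeHazard f a = ∫ y in 0..a, f y := by
  rw [intervalIntegral.integral_of_le ha, integral_Ioc_eq_integral_Ioo]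
  rfl

theorem intervalIntegrable_of_integrableOn_Ioo (hfi : ∀ x, 0 < x → IntegrableOn f (Ioo 0 x))
    (ha : 0 ≤ a) (hab : a ≤ b) : IntervalIntegrable f volume a b :=
  (intervalIntegrable_iff_integrableOn_Ioo_of_le hab).2 <|
    (hfi (b + 1) (by linarith)).mono_set fun y hy => ⟨ha.trans_lt hy.1, by linarith [hy.2]⟩

theorem cumulativeHazard_nonneg (hf₀ : ∀ x, 0 < x → 0 ≤ f x) (x : ℝ) :
    0 ≤ cumulativeHazard f x :=
  setIntegral_nonneg measurableSet_Ioo fun y hy => hf₀ y hy.1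

theorem monotone_cumulativeHazard (hf₀ : ∀ x, 0 < x → 0 ≤ f x)
    (hfi : ∀ x, 0 < x → IntegrableOn f (Ioo 0 x)) : Monotone (cumulativeHazard f) := by
  intro x x' hxx'
  rcases le_or_gt x' 0 with hx' | hx'
  · simp [cumulativeHazard, Ioo_eq_empty_of_le hx', Ioo_eq_empty_of_le (hxx'.trans hx')]
  · exact setIntegral_mono_set (hfi x' hx')
      ((ae_restrict_iff' measurableSet_Ioo).2 (ae_of_all _ fun y hy => hf₀ y hy.1))
      (Ioo_subset_Ioo_right hxx').eventuallyLE

theorem measurable_cumulativeHazard (hf₀ : ∀ x, 0 < x → 0 ≤ f x)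
    (hfi : ∀ x, 0 < x → IntegrableOn f (Ioo 0 x)) : Measurable (cumulativeHazard f) :=
  (monotone_cumulativeHazard hf₀ hfi).measurable

theorem integral_mul_exp_neg_cumulativeHazard (hfi : ∀ x, 0 < x → IntegrableOn f (Ioo 0 x))
    (ha : 0 ≤ a) (hab : a ≤ b) :
    ∫ x in a..b, f x * Real.exp (-cumulativeHazard f x) =
      Real.exp (-cumulativeHazard f a) - Real.exp (-cumulativeHazard f b) := by
  have hF : EqOn (fun x => f x * Real.exp (-cumulativeHazard f x))
      (fun x => f x * Real.exp (-∫ t in 0..x, f t)) (uIcc a b) := fun x hx => by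
    simp only [cumulativeHazard_eq_intervalIntegral (ha.trans (uIcc_of_le hab ▸ hx).1)]
  rw [intervalIntegral.integral_congr hF, cumulativeHazard_eq_intervalIntegral ha,
    cumulativeHazard_eq_intervalIntegral (ha.trans hab)]
  exact integral_mul_exp_neg_primitive
    (intervalIntegrable_of_integrableOn_Ioo hfi le_rfl (ha.trans hab)) ha hab

theorem integrableOn_mul_exp_neg_cumulativeHazard (hf₀ : ∀ x, 0 < x → 0 ≤ f x)
    (hfi : ∀ x, 0 < x → IntegrableOn f (Ioo 0 x)) (ha : 0 ≤ a) (b : ℝ) :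
    IntegrableOn (fun x => f x * Real.exp (-cumulativeHazard f x)) (Ioc a b) := by
  rcases le_or_gt a b with hab | hba
  · refine ((intervalIntegrable_iff_integrableOn_Ioc_of_le hab).1
      (intervalIntegrable_of_integrableOn_Ioo hfi ha hab)).mul_bdd (c := 1)
      (Real.measurable_exp.comp (measurable_cumulativeHazard hf₀ hfi).neg).aestronglyMeasurable
      (ae_of_all _ fun x => ?_)
    rw [Real.norm_eq_abs, Real.abs_exp, Real.exp_le_one_iff, neg_nonpos]
    exact cumulativeHazard_nonneg hf₀ x
  · simp [Ioc_eq_empty_of_le hba.le]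

theorem tendsto_integral_mul_exp_neg_cumulativeHazard (hf : IsHazardRate f) (ha : 0 ≤ a) :
    Tendsto (fun b => ∫ x in a..b, f x * Real.exp (-cumulativeHazard f x)) atTop
      (𝓝 (Real.exp (-cumulativeHazard f a))) := by
  have hexp : Tendsto (fun b => Real.exp (-cumulativeHazard f b)) atTop (𝓝 0) :=
    Real.tendsto_exp_neg_atTop_nhds_zero.comp hf.tendsto_cumulativeHazard
  refine (sub_zero (Real.exp _) ▸ tendsto_const_nhds.sub hexp).congr' ?_
  filter_upwards [eventually_ge_atTop a] with b hab
  exact (integral_mul_exp_neg_cumulativeHazard hf.integrableOn_Ioo ha hab).symm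

theorem lifetimeMeasure_Ioi (hf : IsHazardRate f) (ha : 0 ≤ a) :
    lifetimeMeasure f (Ioi a) = ENNReal.ofReal (Real.exp (-cumulativeHazard f a)) := by
  set g : ℝ → ℝ := fun x => f x * Real.exp (-cumulativeHazard f x)
  have hg₀ : ∀ x, a < x → 0 ≤ g x := fun x hx =>
    mul_nonneg (hf.nonneg x (ha.trans_lt hx)) (Real.exp_pos _).le
  have hlim := tendsto_integral_mul_exp_neg_cumulativeHazard hf ha
  have hint : IntegrableOn g (Ioi a) := by
    refine integrableOn_Ioi_of_intervalIntegral_norm_tendsto _ a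
      (integrableOn_mul_exp_neg_cumulativeHazard hf.nonneg hf.integrableOn_Ioo ha) tendsto_id
      (hlim.congr' ?_)
    filter_upwards [eventually_ge_atTop a] with b hab
    refine intervalIntegral.integral_congr_ae (ae_of_all _ fun x hx => ?_)
    rw [uIoc_of_le hab] at hx
    exact (Real.norm_of_nonneg (hg₀ x hx.1)).symm
  rw [lifetimeMeasure, withDensity_apply _ measurableSet_Ioi,
    Measure.restrict_restrict measurableSet_Ioi, Ioi_inter_Ioi, sup_eq_left.2 ha,
    ← ofReal_integral_eq_lintegral_ofReal hint
      ((ae_restrict_iff' measurableSet_Ioi).2 (ae_of_all _ hg₀)),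
    tendsto_nhds_unique (intervalIntegral_tendsto_integral_Ioi a hint tendsto_id) hlim]

instance : NullSingletonClass (lifetimeMeasure f) := by
  unfold lifetimeMeasure
  infer_instance

theorem lifetimeMeasure_compl_Ioi : lifetimeMeasure f (Ioi 0)ᶜ = 0 := by
  rw [lifetimeMeasure, withDensity_apply _ measurableSet_Ioi.compl,
    Measure.restrict_restrict measurableSet_Ioi.compl, compl_inter_self, Measure.restrict_empty,
    lintegral_zero_measure]

theorem ae_pos_lifetimeMeasure : ∀ᵐ x ∂lifetimeMeasure f, 0 < x :=
  measure_eq_zero_iff_ae_notMem.1 lifetimeMeasure_compl_Ioi |>.mono fun _ hx => not_not.1 hx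

theorem isProbabilityMeasure_lifetimeMeasure (hf : IsHazardRate f) :
    IsProbabilityMeasure (lifetimeMeasure f) := by
  constructor
  rw [← measure_inter_conull lifetimeMeasure_compl_Ioi, univ_inter,
    lifetimeMeasure_Ioi hf le_rfl]
  simp

theorem lifetimeMeasure_eq_of_isUpperSet (hf : IsHazardRate f) {U : Set ℝ}
    (hU : IsUpperSet (U ∩ Ioi 0)) (hne : (U ∩ Ioi 0).Nonempty) :
    lifetimeMeasure f U = ENNReal.ofReal (Real.exp (-cumulativeHazard f (sInf (U ∩ Ioi 0)))) := by
  rw [← measure_inter_conull lifetimeMeasure_compl_Ioi,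
    IsUpperSet.measure_eq_measure_Ioi_csInf hU hne ⟨0, fun x hx => hx.2.le⟩,
    lifetimeMeasure_Ioi hf (le_csInf hne fun x hx => hx.2.le)]

theorem integral_eq_lintegral_lifetimeMeasure {h : ℝ → ℝ} (hf_meas : Measurable f)
    (hf₀ : ∀ x, 0 < x → 0 ≤ f x) (hfi : ∀ x, 0 < x → IntegrableOn f (Ioo 0 x))
    (hh₀ : ∀ x, 0 < x → 0 ≤ h x) (hh : AEMeasurable h (volume.restrict (Ioi 0))) :
    ∫ x in Ioi 0, h x * f x * Real.exp (-cumulativeHazard f x) =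
      (∫⁻ x, ENNReal.ofReal (h x) ∂lifetimeMeasure f).toReal := by
  have hexp : Measurable fun x => Real.exp (-cumulativeHazard f x) :=
    Real.measurable_exp.comp (measurable_cumulativeHazard hf₀ hfi).neg
  have hdens : Measurable fun x => f x * Real.exp (-cumulativeHazard f x) := hf_meas.mul hexp
  have hpos : ∀ᵐ x ∂volume.restrict (Ioi (0 : ℝ)), 0 < x := ae_restrict_mem measurableSet_Ioi
  rw [lifetimeMeasure, lintegral_withDensity_eq_lintegral_mul₀ hdens.ennreal_ofReal.aemeasurable
    hh.ennreal_ofReal, integral_eq_lintegral_of_nonneg_ae (hpos.mono fun x hx =>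
      by have := mul_nonneg (hh₀ x hx) (hf₀ x hx); positivity)
    ((hh.aestronglyMeasurable.fun_mul hf_meas.aestronglyMeasurable).fun_mul
      hexp.aestronglyMeasurable)]
  refine congrArg ENNReal.toReal (lintegral_congr_ae (hpos.mono fun x hx => ?_))
  rw [Pi.mul_apply, ← ENNReal.ofReal_mul (mul_nonneg (hf₀ x hx) (Real.exp_pos _).le)]
  ring_nf

theorem lintegral_ofReal_eq_lintegral_lifetimeMeasure_lt {h : ℝ → ℝ}
    (hh₀ : ∀ x, 0 < x → 0 ≤ h x) (hh : AEMeasurable h (volume.restrict (Ioi 0))) :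
    ∫⁻ x, ENNReal.ofReal (h x) ∂lifetimeMeasure f =
      ∫⁻ t in Ioi 0, lifetimeMeasure f {x | t < h x} :=
  lintegral_eq_lintegral_meas_lt _ (ae_pos_lifetimeMeasure.mono hh₀)
    (hh.mono_ac (withDensity_absolutelyContinuous _ _))

theorem lintegral_ofReal_lifetimeMeasure_ne_top (hf : IsHazardRate f) {h : ℝ → ℝ} {M : ℝ}
    (hM : ∀ x, 0 < x → h x ≤ M) : ∫⁻ x, ENNReal.ofReal (h x) ∂lifetimeMeasure f ≠ ⊤ := by
  have := isProbabilityMeasure_lifetimeMeasure hf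
  refine ne_top_of_le_ne_top (ENNReal.ofReal_ne_top (r := M)) ((lintegral_mono_ae
    (ae_pos_lifetimeMeasure.mono fun x hx => ENNReal.ofReal_le_ofReal (hM x hx))).trans_eq ?_)
  simp

end Lifetime

section Comparison

variable {f₁ f₂ : ℝ → ℝ} {U : Set ℝ}

theorem lifetimeMeasure_le_of_isUpperSet (hf₁ : IsHazardRate f₁) (hf₂ : IsHazardRate f₂)
    (hF : ∀ x, 0 < x → cumulativeHazard f₁ x ≤ cumulativeHazard f₂ x)
    (hU : IsUpperSet (U ∩ Ioi 0)) : lifetimeMeasure f₂ U ≤ lifetimeMeasure f₁ U := by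
  rcases (U ∩ Ioi 0).eq_empty_or_nonempty with hempty | hne
  · rw [← measure_inter_conull lifetimeMeasure_compl_Ioi, hempty, measure_empty]
    exact bot_le
  rw [lifetimeMeasure_eq_of_isUpperSet hf₁ hU hne, lifetimeMeasure_eq_of_isUpperSet hf₂ hU hne]
  refine ENNReal.ofReal_le_ofReal (Real.exp_le_exp.2 (neg_le_neg ?_))
  rcases (le_csInf hne fun x hx => hx.2.le).eq_or_lt with h0 | hpos
  · simp [← h0]
  · exact hF _ hpos

theorem lifetimeMeasure_lt_of_isUpperSet (hf₁ : IsHazardRate f₁) (hf₂ : IsHazardRate f₂)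
    (hF : ∀ x, 0 < x → cumulativeHazard f₁ x < cumulativeHazard f₂ x)
    (hU : IsUpperSet (U ∩ Ioi 0)) (hne : (U ∩ Ioi 0).Nonempty) (hpos : 0 < sInf (U ∩ Ioi 0)) :
    lifetimeMeasure f₂ U < lifetimeMeasure f₁ U := by
  rw [lifetimeMeasure_eq_of_isUpperSet hf₁ hU hne, lifetimeMeasure_eq_of_isUpperSet hf₂ hU hne]
  exact (ENNReal.ofReal_lt_ofReal_iff (Real.exp_pos _)).2
    (Real.exp_lt_exp.2 (neg_lt_neg (hF _ hpos)))

theorem lintegral_ofReal_lifetimeMeasure_lt (hf₁ : IsHazardRate f₁) (hf₂ : IsHazardRate f₂)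
    (hF : ∀ x, 0 < x → cumulativeHazard f₁ x < cumulativeHazard f₂ x) {h : ℝ → ℝ}
    (hh_pos : ∀ x, 0 < x → 0 < h x) (hh_mono : StrictMonoOn h (Ioi 0)) {M : ℝ}
    (hM : ∀ x, 0 < x → h x ≤ M) :
    ∫⁻ x, ENNReal.ofReal (h x) ∂lifetimeMeasure f₂ <
      ∫⁻ x, ENNReal.ofReal (h x) ∂lifetimeMeasure f₁ := by
  have hh₀ : ∀ x, 0 < x → 0 ≤ h x := fun x hx => (hh_pos x hx).le
  have hh := aemeasurable_restrict_of_monotoneOn (μ := volume) measurableSet_Ioi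
    hh_mono.monotoneOn
  have hU := hh_mono.monotoneOn.isUpperSet_setOf_lt_inter (isUpperSet_Ioi 0)
  -- For `t ∈ (h 1, h 2)`, the set `{h > t} ∩ (0,∞)` contains `2` and lies in `[1,∞)`.
  have hstrict : ∀ t ∈ Ioo (h 1) (h 2),
      lifetimeMeasure f₂ {x | t < h x} < lifetimeMeasure f₁ {x | t < h x} := fun t ht =>
    have hne : ({x | t < h x} ∩ Ioi 0).Nonempty := ⟨2, ht.2, mem_Ioi.2 two_pos⟩
    lifetimeMeasure_lt_of_isUpperSet hf₁ hf₂ hF (hU t) hne <| one_pos.trans_le <|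
      le_csInf hne fun x hx => le_of_not_gt fun hx1 =>
        (hh_mono hx.2 (mem_Ioi.2 one_pos) hx1).trans ht.1 |>.not_gt hx.1
  have hfin₂ := lintegral_ofReal_lifetimeMeasure_ne_top hf₂ hM
  simp only [lintegral_ofReal_eq_lintegral_lifetimeMeasure_lt hh₀ hh] at hfin₂ ⊢
  refine lintegral_strict_mono_of_ae_le_of_frequently_ae_lt
    (Antitone.measurable (f := fun t => lifetimeMeasure f₁ {x | t < h x})
      fun t t' htt' => measure_mono fun x hx => htt'.trans_lt hx).aemeasurable
    hfin₂ (ae_of_all _ fun t =>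
      lifetimeMeasure_le_of_isUpperSet hf₁ hf₂ (fun x hx => (hF x hx).le) (hU t))
    (frequently_ae_iff.2 (lt_of_lt_of_le ?_ (measure_mono fun t ht => (hstrict t ht).ne)).ne')
  rw [Measure.restrict_eq_self _ (show Ioo (h 1) (h 2) ⊆ Ioi 0 from
    fun t ht => (hh_pos 1 one_pos).trans ht.1), Real.volume_Ioo]
  exact ENNReal.ofReal_pos.2
    (sub_pos.2 (hh_mono (mem_Ioi.2 one_pos) (mem_Ioi.2 two_pos) one_lt_two))

end Comparison

theorem functional_I_strict_antitone_general
    (h f₁ f₂ : ℝ → ℝ)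
    (hh_pos : ∀ x, 0 < x → 0 < h x)
    (hh_mono : StrictMonoOn h (Set.Ioi 0))
    (hh_bdd : ∃ M, ∀ x, 0 < x → h x ≤ M)
    (hf₁_meas : Measurable f₁)
    (hf₂_meas : Measurable f₂)
    (hf₁_nonneg : ∀ x, 0 < x → 0 ≤ f₁ x)
    (hf₂_nonneg : ∀ x, 0 < x → 0 ≤ f₂ x)
    (hf₁_loc : ∀ x, 0 < x → IntegrableOn f₁ (Set.Ioo 0 x))
    (hf₂_loc : ∀ x, 0 < x → IntegrableOn f₂ (Set.Ioo 0 x))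
    (hf₁_div : Tendsto (fun x => ∫ y in Set.Ioo 0 x, f₁ y) atTop atTop)
    (hf₂_div : Tendsto (fun x => ∫ y in Set.Ioo 0 x, f₂ y) atTop atTop)
    (hlt : ∀ x, 0 < x → (∫ y in Set.Ioo 0 x, f₁ y) < ∫ y in Set.Ioo 0 x, f₂ y) :
    ∫ x in Set.Ioi 0, h x * f₂ x * Real.exp (-(∫ y in Set.Ioo 0 x, f₂ y)) <
      ∫ x in Set.Ioi 0, h x * f₁ x * Real.exp (-(∫ y in Set.Ioo 0 x, f₁ y)) := by
  obtain ⟨M, hM⟩ := hh_bdd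
  have hf₁ : IsHazardRate f₁ := ⟨hf₁_nonneg, hf₁_loc, hf₁_div⟩
  have hf₂ : IsHazardRate f₂ := ⟨hf₂_nonneg, hf₂_loc, hf₂_div⟩
  have hh₀ : ∀ x, 0 < x → 0 ≤ h x := fun x hx => (hh_pos x hx).le
  have hh := aemeasurable_restrict_of_monotoneOn (μ := volume) measurableSet_Ioi
    hh_mono.monotoneOn
  show ∫ x in Ioi 0, h x * f₂ x * Real.exp (-cumulativeHazard f₂ x) <
    ∫ x in Ioi 0, h x * f₁ x * Real.exp (-cumulativeHazard f₁ x)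
  rw [integral_eq_lintegral_lifetimeMeasure hf₁_meas hf₁_nonneg hf₁_loc hh₀ hh,
    integral_eq_lintegral_lifetimeMeasure hf₂_meas hf₂_nonneg hf₂_loc hh₀ hh,
    ENNReal.toReal_lt_toReal (lintegral_ofReal_lifetimeMeasure_ne_top hf₂ hM)
      (lintegral_ofReal_lifetimeMeasure_ne_top hf₁ hM)]
  exact lintegral_ofReal_lifetimeMeasure_lt hf₁ hf₂ hlt hh_pos hh_mono hM

/-- Let `h` be positive, strictly increasing and bounded on `(0,∞)` and
let `f₁, f₂` be measurable, non-negative, locally integrable on `(0,∞)` with divergent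
integral `∫_0^∞ fᵢ = ∞`. If `f₁ ≤ f₂` a.e. on `(0,∞)` and `∫_0^x f₁ < ∫_0^x f₂` for every
`x > 0`, then `I(f₁) > I(f₂)` where `I(f) = ∫_0^∞ h(x) f(x) exp(-∫_0^x f) dx`. -/
theorem functional_I_strict_antitone
    (h f₁ f₂ : ℝ → ℝ)
    (hh_pos : ∀ x, 0 < x → 0 < h x)
    (hh_mono : StrictMonoOn h (Set.Ioi 0))
    (hh_bdd : ∃ M, ∀ x, 0 < x → h x ≤ M)
    (hf₁_meas : Measurable f₁)
    (hf₂_meas : Measurable f₂)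
    (hf₁_nonneg : ∀ x, 0 < x → 0 ≤ f₁ x)
    (hf₂_nonneg : ∀ x, 0 < x → 0 ≤ f₂ x)
    (hf₁_loc : ∀ x, 0 < x → IntegrableOn f₁ (Set.Ioo 0 x))
    (hf₂_loc : ∀ x, 0 < x → IntegrableOn f₂ (Set.Ioo 0 x))
    (hf₁_div : Tendsto (fun x => ∫ y in Set.Ioo 0 x, f₁ y) atTop atTop)
    (hf₂_div : Tendsto (fun x => ∫ y in Set.Ioo 0 x, f₂ y) atTop atTop)
    (hle : ∀ᵐ x ∂(volume : Measure ℝ), 0 < x → f₁ x ≤ f₂ x)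
    (hlt : ∀ x, 0 < x → (∫ y in Set.Ioo 0 x, f₁ y) < ∫ y in Set.Ioo 0 x, f₂ y) :
    ∫ x in Set.Ioi 0, h x * f₂ x * Real.exp (-(∫ y in Set.Ioo 0 x, f₂ y)) <
      ∫ x in Set.Ioi 0, h x * f₁ x * Real.exp (-(∫ y in Set.Ioo 0 x, f₁ y)) :=
  functional_I_strict_antitone_general h f₁ f₂ hh_pos hh_mono hh_bdd hf₁_meas hf₂_meas hf₁_nonneg
    hf₂_nonneg hf₁_loc hf₂_loc hf₁_div hf₂_div hlt
end

section
/- Let h, f : (0,∞) × L¹₊(0,∞) → [0,∞) be such that for every u ∈ L¹₊(0,∞): x ↦ h(x,u) is positive, bounded and non-decreasing; x ↦ f(x,u) is measurable, non-negative and locally integrable with ∫_0^∞ f(y,u) dy = ∞; and for every x > 0 the integrand x ↦ h(x,u) f(x,u) exp(−∫_0^x f(y,u) dy) is measurable. Suppose u₁, u₂ ∈ L¹₊(0,∞) satisfy u₁ ≤ u₂ a.e. with u₁ ≠ u₂, and suppose h(x,u₁) > h(x,u₂) for all x > 0 (h is strictly decreasing in u), f(x,u₁) ≤ f(x,u₂)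 for all x > 0 (f is non-decreasing in u), and ∫_0^∞ h(x,u₂) f(x,u₂) exp(−∫_0^x f(y,u₂) dy) dx is finite. Then R(u₁) > R(u₂), where R(u) = ∫_0^∞ h(x,u) f(x,u) exp(−∫_0^x f(y,u) dy) dx. -/
open Set Filter MeasureTheory

/-- `u ∈ L¹₊(0,∞)`: `u` is integrable on `(0,∞)` and non-negative a.e. on `(0,∞)`. -/
def MemL1Plus (u : ℝ → ℝ) : Prop :=
  MeasureTheory.IntegrableOn u (Set.Ioi 0) ∧
    ∀ᵐ x ∂(MeasureTheory.volume : MeasureTheory.Measure ℝ), 0 < x → 0 ≤ u x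

/-- The generalized net reproduction rate
`R(u) = ∫_0^∞ h(x,u) f(x,u) exp(-∫_0^x f(y,u) dy) dx`. -/
noncomputable def netReproduction (h f : ℝ → (ℝ → ℝ) → ℝ) (u : ℝ → ℝ) : ℝ :=
  ∫ x in Set.Ioi 0, h x u * f x u * Real.exp (-(∫ y in Set.Ioo 0 x, f y u))

namespace NetRepAux


noncomputable def prim (f : ℝ → ℝ) (x : ℝ) : ℝ := ∫ y in Set.Ioo 0 x, f y

variable {f : ℝ → ℝ}

lemma prim_eq_Ioc (f : ℝ → ℝ) (x : ℝ) : prim f x = ∫ y in Set.Ioc 0 x, f y :=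
  (MeasureTheory.integral_Ioc_eq_integral_Ioo).symm

lemma int_Ioc (hloc : ∀ x, 0 < x → IntegrableOn f (Set.Ioo 0 x)) {x y : ℝ}
    (hx : 0 ≤ x) (_hxy : x ≤ y) : IntegrableOn f (Set.Ioc x y) := by
  rcases le_or_gt y 0 with hy | hy
  · have : Set.Ioc x y = (∅ : Set ℝ) := by
      apply Set.Ioc_eq_empty
      intro hlt
      exact absurd (hy.trans_lt (hx.trans_lt hlt)) (lt_irrefl _)
    rw [this]; exact integrableOn_empty
  · refine (hloc (y + 1) (by linarith)).mono_set ?_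
    intro t ht
    exact ⟨hx.trans_lt ht.1, by have := ht.2; linarith⟩

lemma prim_add (hloc : ∀ x, 0 < x → IntegrableOn f (Set.Ioo 0 x)) {x y : ℝ}
    (hx : 0 ≤ x) (hxy : x ≤ y) :
    prim f y = prim f x + ∫ t in Set.Ioc x y, f t := by
  rw [prim_eq_Ioc, prim_eq_Ioc, ← Set.Ioc_union_Ioc_eq_Ioc hx hxy]
  exact MeasureTheory.setIntegral_union (Set.Ioc_disjoint_Ioc_of_le le_rfl) measurableSet_Ioc
    (int_Ioc hloc le_rfl hx) (int_Ioc hloc hx hxy)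

lemma prim_nonneg (hnn : ∀ x, 0 < x → 0 ≤ f x) (x : ℝ) : 0 ≤ prim f x :=
  MeasureTheory.setIntegral_nonneg measurableSet_Ioo fun t ht => hnn t ht.1

lemma prim_mono (hnn : ∀ x, 0 < x → 0 ≤ f x)
    (hloc : ∀ x, 0 < x → IntegrableOn f (Set.Ioo 0 x)) : Monotone (prim f) := by
  intro x y hxy
  rcases le_or_gt x 0 with hx | hx
  · have : prim f x = 0 := by
      unfold prim
      rw [Set.Ioo_eq_empty (by intro h; exact absurd (h.trans_le hx) (lt_irrefl _))]
      simp
    rw [this]; exact prim_nonneg hnn y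
  · rw [prim_add hloc hx.le hxy]
    have : 0 ≤ ∫ t in Set.Ioc x y, f t :=
      MeasureTheory.setIntegral_nonneg measurableSet_Ioc fun t ht => hnn t (hx.trans ht.1)
    linarith

lemma prim_meas (hnn : ∀ x, 0 < x → 0 ≤ f x)
    (hloc : ∀ x, 0 < x → IntegrableOn f (Set.Ioo 0 x)) : Measurable (prim f) :=
  (prim_mono hnn hloc).measurable

lemma prim_cont (hloc : ∀ x, 0 < x → IntegrableOn f (Set.Ioo 0 x)) :
    ContinuousOn (prim f) (Set.Ici 0) := by
  intro x hx
  have hx0 : (0:ℝ) ≤ x := hx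
  have hint : IntegrableOn f (Set.Icc 0 (x + 1)) := by
    rw [integrableOn_Icc_iff_integrableOn_Ioo]
    exact (hloc (x + 2) (by linarith)).mono_set (Set.Ioo_subset_Ioo le_rfl (by linarith))
  have hcont : ContinuousOn (prim f) (Set.Icc 0 (x + 1)) := by
    refine (intervalIntegral.continuousOn_primitive hint).congr ?_
    intro z _
    exact prim_eq_Ioc f z
  have hmem : Set.Icc 0 (x + 1) ∈ nhdsWithin x (Set.Ici 0) := by
    rw [← Set.Ici_inter_Iic]
    exact inter_mem_nhdsWithin _ (Iic_mem_nhds (by linarith))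
  exact (hcont x ⟨hx0, by linarith⟩).mono_of_mem_nhdsWithin hmem

lemma lint_Ioc (hnn : ∀ x, 0 < x → 0 ≤ f x)
    (hloc : ∀ x, 0 < x → IntegrableOn f (Set.Ioo 0 x)) {x y : ℝ}
    (hx : 0 ≤ x) (hxy : x ≤ y) :
    ∫⁻ t in Set.Ioc x y, ENNReal.ofReal (f t) = ENNReal.ofReal (prim f y - prim f x) := by
  have hadd := prim_add hloc hx hxy
  have hnn' : 0 ≤ᵐ[volume.restrict (Set.Ioc x y)] f := by
    filter_upwards [MeasureTheory.ae_restrict_mem measurableSet_Ioc] with t ht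
    exact hnn t (hx.trans_lt ht.1)
  rw [← MeasureTheory.ofReal_integral_eq_lintegral_ofReal (int_Ioc hloc hx hxy) hnn']
  congr 1
  linarith



lemma expAux_hasDeriv (c t : ℝ) :
    HasDerivAt (fun t => -((t - c + 1) * Real.exp (-t))) (Real.exp (-t) * (t - c)) t := by
  have h1 : HasDerivAt (fun t : ℝ => t - c + 1) 1 t := ((hasDerivAt_id t).sub_const c).add_const 1
  have h2 : HasDerivAt (fun t : ℝ => Real.exp (-t)) (-Real.exp (-t)) t := by
    simpa [Function.comp_def] using (Real.hasDerivAt_exp (-t)).comp t ((hasDerivAt_id t).neg)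
  have h3 : HasDerivAt (fun t => -((t - c + 1) * Real.exp (-t)))
      (-(1 * Real.exp (-t) + (t - c + 1) * -Real.exp (-t))) t := (h1.mul h2).neg
  convert h3 using 1
  ring

lemma expAux_tendsto (c : ℝ) :
    Tendsto (fun t => -((t - c + 1) * Real.exp (-t))) atTop (nhds 0) := by
  have t1 : Tendsto (fun t : ℝ => t * Real.exp (-t)) atTop (nhds 0) := by
    simpa using Real.tendsto_pow_mul_exp_neg_atTop_nhds_zero 1
  have t2 : Tendsto (fun t : ℝ => Real.exp (-t)) atTop (nhds 0) :=
    Real.tendsto_exp_neg_atTop_nhds_zero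
  have := (t1.add (t2.const_mul (1 - c))).neg
  simp only [add_zero, neg_zero, mul_zero, zero_add] at this
  convert this using 2 with t
  ring

lemma exp_moment_integrable (c : ℝ) :
    IntegrableOn (fun t => Real.exp (-t) * (t - c)) (Set.Ioi c) := by
  refine MeasureTheory.integrableOn_Ioi_deriv_of_nonneg
    (expAux_hasDeriv c c).continuousAt.continuousWithinAt
    (fun x _ => expAux_hasDeriv c x) ?_ (expAux_tendsto c)
  intro x hx
  exact mul_nonneg (Real.exp_nonneg _) (by simp at hx; linarith)

lemma exp_moment (c : ℝ) :
    ∫ t in Set.Ioi c, Real.exp (-t) * (t - c) = Real.exp (-c) := by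
  have := MeasureTheory.integral_Ioi_of_hasDerivAt_of_nonneg
    (g := fun t => -((t - c + 1) * Real.exp (-t))) (g' := fun t => Real.exp (-t) * (t - c))
    (a := c) (l := 0)
    (expAux_hasDeriv c c).continuousAt.continuousWithinAt
    (fun x _ => expAux_hasDeriv c x)
    (fun x hx => mul_nonneg (Real.exp_nonneg _) (by simp at hx; linarith))
    (expAux_tendsto c)
  rw [this]
  ring_nf

lemma exp_integrableOn_Ioi (c : ℝ) : IntegrableOn (fun t => Real.exp (-t)) (Set.Ioi c) := by
  have := exp_neg_integrableOn_Ioi c (b := 1) one_pos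
  simpa using this

lemma ofReal_exp_eq_lintegral (c : ℝ) :
    ENNReal.ofReal (Real.exp (-c)) = ∫⁻ t in Set.Ioi c, ENNReal.ofReal (Real.exp (-t)) := by
  rw [← MeasureTheory.ofReal_integral_eq_lintegral_ofReal (exp_integrableOn_Ioi c)
    (Filter.Eventually.of_forall fun t => Real.exp_nonneg _), integral_exp_neg_Ioi]



lemma crux (hnn : ∀ x, 0 < x → 0 ≤ f x)
    (hloc : ∀ x, 0 < x → IntegrableOn f (Set.Ioo 0 x))
    (hdiv : Tendsto (prim f) atTop atTop) {a t : ℝ} (ha : 0 ≤ a) (hat : prim f a < t) :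
    ∫⁻ x in {x | prim f x < t} ∩ Set.Ioi a, ENNReal.ofReal (f x)
      = ENNReal.ofReal (t - prim f a) := by
  have Fmono := prim_mono hnn hloc
  have Fcont := prim_cont hloc
  set F := prim f with hFdef
  set S : Set ℝ := {x | F x < t} ∩ Set.Ioi a with hS
  have hne : S.Nonempty := by
    have h1 : Tendsto F (nhdsWithin a (Set.Ioi a)) (nhds (F a)) :=
      (Fcont a ha).mono_left (nhdsWithin_mono a fun z hz => ha.trans (le_of_lt hz))
    have h2 : ∀ᶠ z in nhdsWithin a (Set.Ioi a), F z < t := h1.eventually_lt_const hat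
    obtain ⟨z, hz1, hz2⟩ := (h2.and eventually_mem_nhdsWithin).exists
    exact ⟨z, hz1, hz2⟩
  have hbdd : BddAbove S := by
    obtain ⟨b, hb⟩ := (hdiv.eventually_gt_atTop t).exists
    refine ⟨b, fun z hz => ?_⟩
    by_contra hzb
    push_neg at hzb
    exact absurd hz.1 (not_lt.mpr (le_trans hb.le (Fmono hzb.le)))
  set c := sSup S with hc
  obtain ⟨x₀, hx₀⟩ := hne
  have hac : a < c := lt_of_lt_of_le hx₀.2 (le_csSup hbdd hx₀)
  have hc0 : (0:ℝ) ≤ c := ha.trans hac.le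
  have hsub1 : Set.Ioo a c ⊆ S := by
    intro z hz
    obtain ⟨s, hsS, hzs⟩ := exists_lt_of_lt_csSup ⟨x₀, hx₀⟩ hz.2
    exact ⟨lt_of_le_of_lt (Fmono hzs.le) hsS.1, hz.1⟩
  have hsub2 : S ⊆ Set.Ioc a c := fun z hz => ⟨hz.2, le_csSup hbdd hz⟩
  have hFc_le : F c ≤ t := by
    have hnb : Filter.NeBot (nhdsWithin c (Set.Ioo a c)) := by
      apply mem_closure_iff_nhdsWithin_neBot.mp
      rw [closure_Ioo hac.ne]
      exact ⟨hac.le, le_rfl⟩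
    have htend : Tendsto F (nhdsWithin c (Set.Ioo a c)) (nhds (F c)) :=
      (Fcont c hc0).mono_left (nhdsWithin_mono c fun z hz => ha.trans hz.1.le)
    refine le_of_tendsto htend ?_
    filter_upwards [eventually_mem_nhdsWithin] with z hz
    exact (hsub1 hz).1.le
  have hFc_ge : t ≤ F c := by
    have htend : Tendsto F (nhdsWithin c (Set.Ioi c)) (nhds (F c)) :=
      (Fcont c hc0).mono_left (nhdsWithin_mono c fun z hz => hc0.trans (le_of_lt hz))
    refine ge_of_tendsto htend ?_
    filter_upwards [eventually_mem_nhdsWithin] with z hz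
    by_contra hlt
    push_neg at hlt
    have hzS : z ∈ S := ⟨hlt, hac.trans hz⟩
    exact absurd (le_csSup hbdd hzS) (not_le.mpr hz)
  have hFc : F c = t := le_antisymm hFc_le hFc_ge
  have hIoc : ∫⁻ x in Set.Ioc a c, ENNReal.ofReal (f x) = ENNReal.ofReal (t - F a) := by
    rw [lint_Ioc hnn hloc ha hac.le, ← hFdef, hFc]
  have hIoo : ∫⁻ x in Set.Ioo a c, ENNReal.ofReal (f x) = ENNReal.ofReal (t - F a) := by
    rw [MeasureTheory.setLIntegral_congr (MeasureTheory.Ioo_ae_eq_Ioc (a := a) (b := c)), hIoc]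
  refine le_antisymm ?_ ?_
  · calc ∫⁻ x in S, ENNReal.ofReal (f x) ≤ ∫⁻ x in Set.Ioc a c, ENNReal.ofReal (f x) :=
        lintegral_mono_set hsub2
      _ = _ := hIoc
  · calc ENNReal.ofReal (t - F a) = ∫⁻ x in Set.Ioo a c, ENNReal.ofReal (f x) := hIoo.symm
      _ ≤ _ := lintegral_mono_set hsub1



lemma outer_eval {c : ℝ} (hc : 0 ≤ c) :
    ∫⁻ t in Set.Ioi 0, ENNReal.ofReal (Real.exp (-t)) * ENNReal.ofReal (t - c)
      = ENNReal.ofReal (Real.exp (-c)) := by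
  have h1 : ∀ t : ℝ, ENNReal.ofReal (Real.exp (-t)) * ENNReal.ofReal (t - c)
      = ENNReal.ofReal (Real.exp (-t) * (t - c)) := by
    intro t
    rcases le_total (t - c) 0 with h | h
    · rw [ENNReal.ofReal_of_nonpos h, mul_zero,
        ENNReal.ofReal_of_nonpos (by nlinarith [Real.exp_pos (-t)])]
    · rw [ENNReal.ofReal_mul (Real.exp_nonneg _)]
  simp_rw [h1]
  rw [← Set.Ioc_union_Ioi_eq_Ioi hc,
    MeasureTheory.lintegral_union measurableSet_Ioi (Set.Ioc_disjoint_Ioi le_rfl)]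
  have h2 : ∫⁻ t in Set.Ioc 0 c, ENNReal.ofReal (Real.exp (-t) * (t - c)) = 0 := by
    have hz : ∀ᵐ t ∂(volume.restrict (Set.Ioc 0 c)),
        ENNReal.ofReal (Real.exp (-t) * (t - c)) = 0 := by
      filter_upwards [MeasureTheory.ae_restrict_mem measurableSet_Ioc] with t ht
      exact ENNReal.ofReal_of_nonpos (by nlinarith [Real.exp_pos (-t), ht.2])
    rw [MeasureTheory.lintegral_congr_ae hz, MeasureTheory.lintegral_zero]
  have h3 : ∫⁻ t in Set.Ioi c, ENNReal.ofReal (Real.exp (-t) * (t - c))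
      = ENNReal.ofReal (Real.exp (-c)) := by
    have hnn : 0 ≤ᵐ[volume.restrict (Set.Ioi c)] fun t => Real.exp (-t) * (t - c) := by
      filter_upwards [MeasureTheory.ae_restrict_mem measurableSet_Ioi] with t ht
      exact mul_nonneg (Real.exp_nonneg _) (by simp only [Set.mem_Ioi] at ht; linarith)
    rw [← MeasureTheory.ofReal_integral_eq_lintegral_ofReal (exp_moment_integrable c) hnn,
      exp_moment]
  rw [h2, h3, zero_add]



lemma stepA (hm : Measurable f) (hnn : ∀ x, 0 < x → 0 ≤ f x)
    (hloc : ∀ x, 0 < x → IntegrableOn f (Set.Ioo 0 x))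
    (hdiv : Tendsto (prim f) atTop atTop) {a : ℝ} (ha : 0 ≤ a) :
    ∫⁻ x in Set.Ioi a, ENNReal.ofReal (f x * Real.exp (-prim f x))
      = ENNReal.ofReal (Real.exp (-prim f a)) := by
  have Fmono := prim_mono hnn hloc
  have Fmeas := prim_meas hnn hloc
  have Fnn := prim_nonneg hnn (f := f)
  have step1 : ∀ x ∈ Set.Ioi a,
      ENNReal.ofReal (f x * Real.exp (-prim f x))
        = ∫⁻ t in Set.Ioi 0,
            (if prim f x < t then ENNReal.ofReal (f x) * ENNReal.ofReal (Real.exp (-t)) else 0) := by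
    intro x hx
    have hfx : 0 ≤ f x := hnn x (lt_of_le_of_lt ha hx)
    have hind : (fun t => if prim f x < t then ENNReal.ofReal (Real.exp (-t)) else 0)
        = (Set.Ioi (prim f x)).indicator (fun t => ENNReal.ofReal (Real.exp (-t))) := by
      funext t; by_cases h : prim f x < t <;> simp [Set.indicator, h, Set.mem_Ioi]
    have hresidual : ∫⁻ t in Set.Ioi 0,
          (Set.Ioi (prim f x)).indicator (fun t => ENNReal.ofReal (Real.exp (-t))) t
        = ∫⁻ t in Set.Ioi (prim f x), ENNReal.ofReal (Real.exp (-t)) := by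
      rw [MeasureTheory.lintegral_indicator measurableSet_Ioi,
        MeasureTheory.Measure.restrict_restrict measurableSet_Ioi]
      rw [Set.Ioi_inter_Ioi, max_eq_left (Fnn x)]
    calc ENNReal.ofReal (f x * Real.exp (-prim f x))
        = ENNReal.ofReal (f x) * ENNReal.ofReal (Real.exp (-prim f x)) :=
          ENNReal.ofReal_mul hfx
      _ = ENNReal.ofReal (f x) * ∫⁻ t in Set.Ioi (prim f x), ENNReal.ofReal (Real.exp (-t)) := by
          rw [← ofReal_exp_eq_lintegral]
      _ = ENNReal.ofReal (f x) * ∫⁻ t in Set.Ioi 0,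
            (if prim f x < t then ENNReal.ofReal (Real.exp (-t)) else 0) := by
          rw [hind, hresidual]
      _ = ∫⁻ t in Set.Ioi 0,
            ENNReal.ofReal (f x) * (if prim f x < t then ENNReal.ofReal (Real.exp (-t)) else 0) :=
          (MeasureTheory.lintegral_const_mul' _ _ ENNReal.ofReal_ne_top).symm
      _ = _ := by
          congr 1; funext t; by_cases h : prim f x < t <;> simp [h]
  have hKmeas : Measurable (Function.uncurry fun x t =>
      if prim f x < t then ENNReal.ofReal (f x) * ENNReal.ofReal (Real.exp (-t)) else (0:ENNReal)) := by
    have hset : MeasurableSet {p : ℝ × ℝ | prim f p.1 < p.2} :=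
      measurableSet_lt (Fmeas.comp measurable_fst) measurable_snd
    exact Measurable.ite hset
      ((ENNReal.measurable_ofReal.comp (hm.comp measurable_fst)).mul
        (ENNReal.measurable_ofReal.comp
          ((Real.continuous_exp.measurable).comp measurable_snd.neg)))
      measurable_const
  have inner : ∀ t ∈ Set.Ioi (0:ℝ),
      ∫⁻ x in Set.Ioi a,
          (if prim f x < t then ENNReal.ofReal (f x) * ENNReal.ofReal (Real.exp (-t)) else 0)
        = ENNReal.ofReal (Real.exp (-t)) * ENNReal.ofReal (t - prim f a) := by
    intro t _
    have e1 : ∀ x, (if prim f x < t then ENNReal.ofReal (f x) * ENNReal.ofReal (Real.exp (-t)) else 0)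
        = ENNReal.ofReal (Real.exp (-t))
            * ({x | prim f x < t}.indicator (fun x => ENNReal.ofReal (f x)) x) := by
      intro x
      by_cases h : prim f x < t
      · simp [Set.indicator, h, mul_comm]
      · simp [Set.indicator, h]
    simp_rw [e1]
    rw [MeasureTheory.lintegral_const_mul' _ _ ENNReal.ofReal_ne_top]
    congr 1
    rw [MeasureTheory.lintegral_indicator (measurableSet_lt Fmeas measurable_const),
      MeasureTheory.Measure.restrict_restrict (measurableSet_lt Fmeas measurable_const)]
    by_cases hat : prim f a < t
    · exact crux hnn hloc hdiv ha hat
    · push_neg at hat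
      have hempty : {x | prim f x < t} ∩ Set.Ioi a = ∅ := by
        ext z
        simp only [Set.mem_inter_iff, Set.mem_setOf_eq, Set.mem_Ioi,
          Set.mem_empty_iff_false, iff_false, not_and]
        intro h1 h2
        exact absurd h1 (not_lt.mpr (hat.trans (Fmono h2.le)))
      rw [hempty]
      simp [ENNReal.ofReal_of_nonpos (by linarith : t - prim f a ≤ 0)]
  calc ∫⁻ x in Set.Ioi a, ENNReal.ofReal (f x * Real.exp (-prim f x))
      = ∫⁻ x in Set.Ioi a, ∫⁻ t in Set.Ioi 0,
          (if prim f x < t then ENNReal.ofReal (f x) * ENNReal.ofReal (Real.exp (-t)) else 0) :=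
        MeasureTheory.setLIntegral_congr_fun measurableSet_Ioi
          step1
    _ = ∫⁻ t in Set.Ioi 0, ∫⁻ x in Set.Ioi a,
          (if prim f x < t then ENNReal.ofReal (f x) * ENNReal.ofReal (Real.exp (-t)) else 0) :=
        MeasureTheory.lintegral_lintegral_swap hKmeas.aemeasurable
    _ = ∫⁻ t in Set.Ioi 0, ENNReal.ofReal (Real.exp (-t)) * ENNReal.ofReal (t - prim f a) :=
        MeasureTheory.setLIntegral_congr_fun measurableSet_Ioi
          inner
    _ = ENNReal.ofReal (Real.exp (-prim f a)) := outer_eval (Fnn a)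


end NetRepAux

open NetRepAux in
/-- Under the standing hypotheses on `h` and `f` (for each
`u ∈ L¹₊(0,∞)`: `h(·,u)` positive, bounded, non-decreasing; `f(·,u)` measurable,
non-negative, locally integrable with divergent integral; integrand measurable), if
`u₁ ≤ u₂` a.e. with `u₁ ≠ u₂` in `L¹`, `h(·,u₁) > h(·,u₂)` and `f(·,u₁) ≤ f(·,u₂)`
pointwise on `(0,∞)`, and `R(u₂)` is finite, then `R(u₁) > R(u₂)`. -/
theorem netReproduction_strict_antitone
    (h f : ℝ → (ℝ → ℝ) → ℝ)
    (h_nonneg : ∀ x u, 0 < x → MemL1Plus u → 0 ≤ h x u)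
    (f_nonneg : ∀ x u, 0 < x → MemL1Plus u → 0 ≤ f x u)
    (hh_pos : ∀ u, MemL1Plus u → ∀ x, 0 < x → 0 < h x u)
    (hh_bdd : ∀ u, MemL1Plus u → ∃ M, ∀ x, 0 < x → h x u ≤ M)
    (hh_mono : ∀ u, MemL1Plus u → MonotoneOn (fun x => h x u) (Set.Ioi 0))
    (hf_meas : ∀ u, MemL1Plus u → Measurable (fun x => f x u))
    (hf_loc : ∀ u, MemL1Plus u → ∀ x, 0 < x → IntegrableOn (fun y => f y u) (Set.Ioo 0 x))
    (hf_div : ∀ u, MemL1Plus u →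
      Tendsto (fun x => ∫ y in Set.Ioo 0 x, f y u) atTop atTop)
    (h_integrand_meas : ∀ u, MemL1Plus u →
      Measurable (fun x => h x u * f x u * Real.exp (-(∫ y in Set.Ioo 0 x, f y u))))
    (u₁ u₂ : ℝ → ℝ)
    (hu₁ : MemL1Plus u₁) (hu₂ : MemL1Plus u₂)
    (hu_le : ∀ᵐ x ∂(volume : Measure ℝ), 0 < x → u₁ x ≤ u₂ x)
    (hu_ne : ¬ u₁ =ᵐ[(volume : Measure ℝ).restrict (Set.Ioi 0)] u₂)
    (hh_strict : ∀ x, 0 < x → h x u₂ < h x u₁)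
    (hf_le : ∀ x, 0 < x → f x u₁ ≤ f x u₂)
    (hR₂_fin : IntegrableOn
      (fun x => h x u₂ * f x u₂ * Real.exp (-(∫ y in Set.Ioo 0 x, f y u₂)))
      (Set.Ioi 0)) :
    netReproduction h f u₂ < netReproduction h f u₁ := by
  classical
  set ν₀ : Measure ℝ := volume.restrict (Set.Ioi 0) with hν₀
  obtain ⟨M₁, hM₁⟩ := hh_bdd u₁ hu₁
  have hM₁0 : 0 ≤ M₁ := le_trans (hh_pos u₁ hu₁ 1 one_pos).le (hM₁ 1 one_pos)
  -- basic facts for u₁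
  have hf₁meas : Measurable (fun y => f y u₁) := hf_meas u₁ hu₁
  have hf₁nn : ∀ x, 0 < x → 0 ≤ f x u₁ := fun x hx => f_nonneg x u₁ hx hu₁
  have hf₁loc : ∀ x, 0 < x → IntegrableOn (fun y => f y u₁) (Set.Ioo 0 x) := hf_loc u₁ hu₁
  have hf₁div : Tendsto (prim (fun y => f y u₁)) atTop atTop := hf_div u₁ hu₁
  have hf₂meas : Measurable (fun y => f y u₂) := hf_meas u₂ hu₂
  have hf₂nn : ∀ x, 0 < x → 0 ≤ f x u₂ := fun x hx => f_nonneg x u₂ hx hu₂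
  have hf₂loc : ∀ x, 0 < x → IntegrableOn (fun y => f y u₂) (Set.Ioo 0 x) := hf_loc u₂ hu₂
  have hf₂div : Tendsto (prim (fun y => f y u₂)) atTop atTop := hf_div u₂ hu₂
  -- densities
  set d₁ : ℝ → ENNReal :=
    fun x => ENNReal.ofReal (f x u₁ * Real.exp (-(∫ y in Set.Ioo 0 x, f y u₁))) with hd₁def
  set d₂ : ℝ → ENNReal :=
    fun x => ENNReal.ofReal (f x u₂ * Real.exp (-(∫ y in Set.Ioo 0 x, f y u₂))) with hd₂def
  have hd₁meas : Measurable d₁ := by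
    apply ENNReal.measurable_ofReal.comp
    exact hf₁meas.mul (Real.measurable_exp.comp (prim_meas hf₁nn hf₁loc).neg)
  have hd₂meas : Measurable d₂ := by
    apply ENNReal.measurable_ofReal.comp
    exact hf₂meas.mul (Real.measurable_exp.comp (prim_meas hf₂nn hf₂loc).neg)
  set μ₁ : Measure ℝ := ν₀.withDensity d₁ with hμ₁
  set μ₂ : Measure ℝ := ν₀.withDensity d₂ with hμ₂
  -- ray measures
  have ray₁ : ∀ c : ℝ, 0 ≤ c →
      μ₁ (Set.Ioi c) = ENNReal.ofReal (Real.exp (-(∫ y in Set.Ioo 0 c, f y u₁))) := by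
    intro c hc
    rw [hμ₁, MeasureTheory.withDensity_apply _ measurableSet_Ioi, hν₀,
      MeasureTheory.Measure.restrict_restrict measurableSet_Ioi, Set.Ioi_inter_Ioi,
      max_eq_left hc]
    exact stepA hf₁meas hf₁nn hf₁loc hf₁div hc
  have ray₂ : ∀ c : ℝ, 0 ≤ c →
      μ₂ (Set.Ioi c) = ENNReal.ofReal (Real.exp (-(∫ y in Set.Ioo 0 c, f y u₂))) := by
    intro c hc
    rw [hμ₂, MeasureTheory.withDensity_apply _ measurableSet_Ioi, hν₀,
      MeasureTheory.Measure.restrict_restrict measurableSet_Ioi, Set.Ioi_inter_Ioi,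
      max_eq_left hc]
    exact stepA hf₂meas hf₂nn hf₂loc hf₂div hc
  have hIoi₁ : μ₁ (Set.Ioi 0) = 1 := by
    have := ray₁ 0 le_rfl
    simpa using this
  have hIoi₂ : μ₂ (Set.Ioi 0) = 1 := by
    have := ray₂ 0 le_rfl
    simpa using this
  -- singletons are null
  have sing : ∀ (d : ℝ → ENNReal) (c : ℝ), (ν₀.withDensity d) {c} = 0 := by
    intro d c
    rw [MeasureTheory.withDensity_apply _ (measurableSet_singleton c)]
    apply MeasureTheory.setLIntegral_measure_zero
    rw [hν₀, MeasureTheory.Measure.restrict_apply (measurableSet_singleton c)]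
    exact measure_mono_null Set.inter_subset_left (measure_singleton c)
  -- total mass bound
  have hIic : ∀ (d : ℝ → ENNReal), (ν₀.withDensity d) (Set.Iic 0) = 0 := by
    intro d
    rw [MeasureTheory.withDensity_apply _ measurableSet_Iic, hν₀,
      MeasureTheory.Measure.restrict_restrict measurableSet_Iic, Set.Iic_inter_Ioi,
      Set.Ioc_self, Measure.restrict_empty, MeasureTheory.lintegral_zero_measure]
  have tot : ∀ (d : ℝ → ENNReal), (ν₀.withDensity d) Set.univ ≤ (ν₀.withDensity d) (Set.Ioi 0) := by
    intro d
    calc (ν₀.withDensity d) Set.univ = (ν₀.withDensity d) (Set.Iic 0 ∪ Set.Ioi 0) := by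
          rw [Set.Iic_union_Ioi]
      _ ≤ (ν₀.withDensity d) (Set.Iic 0) + (ν₀.withDensity d) (Set.Ioi 0) :=
          measure_union_le _ _
      _ = (ν₀.withDensity d) (Set.Ioi 0) := by rw [hIic, zero_add]
  -- F₁ ≤ F₂
  have hFle : ∀ c : ℝ, 0 ≤ c →
      (∫ y in Set.Ioo 0 c, f y u₁) ≤ ∫ y in Set.Ioo 0 c, f y u₂ := by
    intro c hc
    rcases eq_or_lt_of_le hc with hc' | hc'
    · rw [← hc']
      simp
    · apply MeasureTheory.setIntegral_mono_on (hf₁loc c hc') (hf₂loc c hc') measurableSet_Ioo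
      intro x hx
      exact hf_le x hx.1
  -- the truncated h functions
  set H₁ : ℝ → ℝ := fun x => if 0 < x then h x u₁ else 0 with hH₁def
  set H₂ : ℝ → ℝ := fun x => if 0 < x then h x u₂ else 0 with hH₂def
  have hH₁mono : Monotone H₁ := by
    intro x y hxy
    simp only [hH₁def]
    by_cases hx : 0 < x
    · have hy : 0 < y := hx.trans_le hxy
      simp only [if_pos hx, if_pos hy]
      exact hh_mono u₁ hu₁ hx hy hxy
    · simp only [if_neg hx]
      by_cases hy : 0 < y
      · simp only [if_pos hy]
        exact h_nonneg y u₁ hy hu₁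
      · simp only [if_neg hy]
        exact le_rfl
  have hH₁meas : Measurable H₁ := hH₁mono.measurable
  have hH₂meas : Measurable H₂ := by
    have : Monotone H₂ := by
      intro x y hxy
      simp only [hH₂def]
      by_cases hx : 0 < x
      · have hy : 0 < y := hx.trans_le hxy
        simp only [if_pos hx, if_pos hy]
        exact hh_mono u₂ hu₂ hx hy hxy
      · simp only [if_neg hx]
        by_cases hy : 0 < y
        · simp only [if_pos hy]
          exact h_nonneg y u₂ hy hu₂
        · simp only [if_neg hy]
          exact le_rfl
    exact this.measurable
  have hH₁nn : ∀ x, 0 ≤ H₁ x := by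
    intro x
    simp only [hH₁def]
    by_cases hx : 0 < x
    · simp only [if_pos hx]; exact h_nonneg x u₁ hx hu₁
    · simp only [if_neg hx]; exact le_rfl
  have hH₂nn : ∀ x, 0 ≤ H₂ x := by
    intro x
    simp only [hH₂def]
    by_cases hx : 0 < x
    · simp only [if_pos hx]; exact h_nonneg x u₂ hx hu₂
    · simp only [if_neg hx]; exact le_rfl
  have hHle : ∀ x, H₂ x ≤ H₁ x := by
    intro x
    simp only [hH₁def, hH₂def]
    by_cases hx : 0 < x
    · simp only [if_pos hx]; exact (hh_strict x hx).le
    · simp only [if_neg hx]; exact le_rfl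
  -- comparison measure of upper level sets
  have hcomp : ∀ t : ℝ, 0 < t → μ₂ {x | t < H₁ x} ≤ μ₁ {x | t < H₁ x} := by
    intro t ht
    by_cases hne : {x | t < H₁ x}.Nonempty
    · have hsub0 : {x | t < H₁ x} ⊆ Set.Ioi 0 := by
        intro x hx
        by_contra h0
        simp only [Set.mem_Ioi, not_lt] at h0
        have : H₁ x = 0 := by simp only [hH₁def, if_neg (not_lt.mpr h0)]
        rw [Set.mem_setOf_eq, this] at hx
        exact absurd (ht.trans hx) (lt_irrefl _)
      have hbdd : BddBelow {x | t < H₁ x} := ⟨0, fun x hx => (hsub0 hx).le⟩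
      set c := sInf {x | t < H₁ x} with hcdef
      have hc0 : 0 ≤ c := le_csInf hne fun x hx => (hsub0 hx).le
      have h1 : Set.Ioi c ⊆ {x | t < H₁ x} := by
        intro z hz
        obtain ⟨s, hsS, hsz⟩ := exists_lt_of_csInf_lt hne hz
        exact lt_of_lt_of_le hsS (hH₁mono hsz.le)
      have h2 : {x | t < H₁ x} ⊆ Set.Ici c := fun z hz => csInf_le hbdd hz
      have key : ∀ μ : Measure ℝ, μ {c} = 0 → μ {x | t < H₁ x} = μ (Set.Ioi c) := by
        intro μ hsing
        apply le_antisymm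
        · calc μ {x | t < H₁ x} ≤ μ (Set.Ici c) := measure_mono h2
            _ = μ (Set.Ioi c ∪ {c}) := by rw [Set.Ioi_union_left]
            _ ≤ μ (Set.Ioi c) + μ {c} := measure_union_le _ _
            _ = μ (Set.Ioi c) := by rw [hsing, add_zero]
        · exact measure_mono h1
      rw [key μ₁ (by rw [hμ₁]; exact sing d₁ c), key μ₂ (by rw [hμ₂]; exact sing d₂ c),
        ray₁ c hc0, ray₂ c hc0]
      apply ENNReal.ofReal_le_ofReal
      apply Real.exp_le_exp.mpr
      simp only [neg_le_neg_iff]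
      exact hFle c hc0
    · rw [Set.not_nonempty_iff_eq_empty.mp hne]
      simp
  -- layer cake comparison
  have hBA : ∫⁻ x, ENNReal.ofReal (H₁ x) ∂μ₂ ≤ ∫⁻ x, ENNReal.ofReal (H₁ x) ∂μ₁ := by
    rw [MeasureTheory.lintegral_eq_lintegral_meas_lt μ₂
        (Filter.Eventually.of_forall hH₁nn) hH₁meas.aemeasurable,
      MeasureTheory.lintegral_eq_lintegral_meas_lt μ₁
        (Filter.Eventually.of_forall hH₁nn) hH₁meas.aemeasurable]
    apply MeasureTheory.lintegral_mono_ae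
    filter_upwards [MeasureTheory.ae_restrict_mem measurableSet_Ioi] with t ht
    exact hcomp t ht
  -- strict inequality in the second slot
  have hBCD : ∫⁻ x, ENNReal.ofReal (H₁ x) ∂μ₂
      = ∫⁻ x, ENNReal.ofReal (H₂ x) ∂μ₂ + ∫⁻ x, ENNReal.ofReal (H₁ x - H₂ x) ∂μ₂ := by
    rw [← MeasureTheory.lintegral_add_left hH₂meas.ennreal_ofReal]
    apply MeasureTheory.lintegral_congr
    intro x
    rw [← ENNReal.ofReal_add (hH₂nn x) (sub_nonneg.mpr (hHle x))]
    congr 1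
    ring
  have hD_pos : 0 < ∫⁻ x, ENNReal.ofReal (H₁ x - H₂ x) ∂μ₂ := by
    rw [MeasureTheory.lintegral_pos_iff_support
      (f := fun x => ENNReal.ofReal (H₁ x - H₂ x)) (hH₁meas.sub hH₂meas).ennreal_ofReal]
    have hsup : Set.Ioi 0 ⊆ Function.support fun x => ENNReal.ofReal (H₁ x - H₂ x) := by
      intro x hx
      have hx' : 0 < x := hx
      have hlt := hh_strict x hx'
      simp only [Function.mem_support, ne_eq, ENNReal.ofReal_eq_zero, not_le, hH₁def, hH₂def,
        if_pos hx']
      linarith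
    calc (0:ENNReal) < 1 := zero_lt_one
      _ = μ₂ (Set.Ioi 0) := hIoi₂.symm
      _ ≤ _ := measure_mono hsup
  -- finiteness facts
  have conv₁ : ∫⁻ x, ENNReal.ofReal (H₁ x) ∂μ₁
      = ∫⁻ x in Set.Ioi 0,
          ENNReal.ofReal (h x u₁ * f x u₁ * Real.exp (-(∫ y in Set.Ioo 0 x, f y u₁))) := by
    rw [hμ₁, MeasureTheory.lintegral_withDensity_eq_lintegral_mul _ hd₁meas
      hH₁meas.ennreal_ofReal, hν₀]
    apply MeasureTheory.lintegral_congr_ae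
    filter_upwards [MeasureTheory.ae_restrict_mem measurableSet_Ioi] with x hx
    have hx' : 0 < x := hx
    simp only [Pi.mul_apply, Function.comp_apply, hH₁def, hd₁def, if_pos hx']
    rw [← ENNReal.ofReal_mul (mul_nonneg (hf₁nn x hx') (Real.exp_nonneg _))]
    congr 1
    ring
  have conv₂ : ∫⁻ x, ENNReal.ofReal (H₂ x) ∂μ₂
      = ∫⁻ x in Set.Ioi 0,
          ENNReal.ofReal (h x u₂ * f x u₂ * Real.exp (-(∫ y in Set.Ioo 0 x, f y u₂))) := by
    rw [hμ₂, MeasureTheory.lintegral_withDensity_eq_lintegral_mul _ hd₂meas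
      hH₂meas.ennreal_ofReal, hν₀]
    apply MeasureTheory.lintegral_congr_ae
    filter_upwards [MeasureTheory.ae_restrict_mem measurableSet_Ioi] with x hx
    have hx' : 0 < x := hx
    simp only [Pi.mul_apply, Function.comp_apply, hH₂def, hd₂def, if_pos hx']
    rw [← ENNReal.ofReal_mul (mul_nonneg (hf₂nn x hx') (Real.exp_nonneg _))]
    congr 1
    ring
  have hC_ne : ∫⁻ x, ENNReal.ofReal (H₂ x) ∂μ₂ ≠ ⊤ := by
    rw [conv₂]
    exact hR₂_fin.lintegral_lt_top.ne
  have hA_ne : ∫⁻ x, ENNReal.ofReal (H₁ x) ∂μ₁ ≠ ⊤ := by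
    have hb : ∫⁻ x, ENNReal.ofReal (H₁ x) ∂μ₁ ≤ ENNReal.ofReal M₁ * μ₁ Set.univ := by
      calc ∫⁻ x, ENNReal.ofReal (H₁ x) ∂μ₁ ≤ ∫⁻ _x, ENNReal.ofReal M₁ ∂μ₁ := by
            apply MeasureTheory.lintegral_mono
            intro x
            apply ENNReal.ofReal_le_ofReal
            simp only [hH₁def]
            by_cases hx : 0 < x
            · simp only [if_pos hx]; exact hM₁ x hx
            · simp only [if_neg hx]; exact hM₁0
        _ = ENNReal.ofReal M₁ * μ₁ Set.univ := MeasureTheory.lintegral_const _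
    refine ne_top_of_le_ne_top ?_ hb
    apply ENNReal.mul_ne_top ENNReal.ofReal_ne_top
    refine ne_top_of_le_ne_top ENNReal.one_ne_top ?_
    calc μ₁ Set.univ ≤ μ₁ (Set.Ioi 0) := by rw [hμ₁]; exact tot d₁
      _ = 1 := hIoi₁
  -- convert the net reproduction integrals
  have R₂eq : netReproduction h f u₂ = (∫⁻ x in Set.Ioi 0,
      ENNReal.ofReal (h x u₂ * f x u₂ * Real.exp (-(∫ y in Set.Ioo 0 x, f y u₂)))).toReal := by
    apply MeasureTheory.integral_eq_lintegral_of_nonneg_ae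
    · filter_upwards [MeasureTheory.ae_restrict_mem measurableSet_Ioi] with x hx
      exact mul_nonneg (mul_nonneg (h_nonneg x u₂ hx hu₂) (f_nonneg x u₂ hx hu₂))
        (Real.exp_nonneg _)
    · exact (h_integrand_meas u₂ hu₂).aestronglyMeasurable
  have R₁eq : netReproduction h f u₁ = (∫⁻ x in Set.Ioi 0,
      ENNReal.ofReal (h x u₁ * f x u₁ * Real.exp (-(∫ y in Set.Ioo 0 x, f y u₁)))).toReal := by
    apply MeasureTheory.integral_eq_lintegral_of_nonneg_ae
    · filter_upwards [MeasureTheory.ae_restrict_mem measurableSet_Ioi] with x hx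
      exact mul_nonneg (mul_nonneg (h_nonneg x u₁ hx hu₁) (f_nonneg x u₁ hx hu₁))
        (Real.exp_nonneg _)
    · exact (h_integrand_meas u₁ hu₁).aestronglyMeasurable
  rw [R₂eq, R₁eq, ← conv₂, ← conv₁]
  have hlt : ∫⁻ x, ENNReal.ofReal (H₂ x) ∂μ₂ < ∫⁻ x, ENNReal.ofReal (H₁ x) ∂μ₁ := by
    calc ∫⁻ x, ENNReal.ofReal (H₂ x) ∂μ₂
        < ∫⁻ x, ENNReal.ofReal (H₂ x) ∂μ₂ + ∫⁻ x, ENNReal.ofReal (H₁ x - H₂ x) ∂μ₂ :=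
          ENNReal.lt_add_right hC_ne hD_pos.ne'
      _ = ∫⁻ x, ENNReal.ofReal (H₁ x) ∂μ₂ := hBCD.symm
      _ ≤ _ := hBA
  exact (ENNReal.toReal_lt_toReal hC_ne hA_ne).mpr hlt
end
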